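/- arXiv:1211.6324 — 9 statements merged into one kernel-verified Lean document; each statement's English description precedes it below -/
import Mathlib

section
/- Let G be a connected simple graph on N vertices with diameter D. For every t < D, there do not exist matrices A^(1), …, A^(t), each complying with G, whose product A^(t) ⋯ A^(1) equals (1/N)·𝟙𝟙ᵀ, where 𝟙𝟙ᵀ is the N×N all-ones matrix. In other words, linear consensus protocols on G require at least D iterations. -/
/-! Entry `(i, j)` of a product of `ℓ` matrices complying with `G` is a sum over walks of
length `ℓ` from `i` to `j` that may pause at a vertex, so it vanishes when `i` and `j` are
more than `ℓ` apart. Two vertices at distance `D` exist, while every entry of `(1/N)·𝟙𝟙ᵀ`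
is nonzero. -/

/-- A real `N × N` matrix complies with the graph `G` when its off-diagonal
entries vanish outside the edges of `G`. -/
def SimpleGraph.Complies {N : ℕ} (G : SimpleGraph (Fin N))
    (A : Matrix (Fin N) (Fin N) ℝ) : Prop :=
  ∀ i j : Fin N, i ≠ j → ¬ G.Adj i j → A i j = 0

namespace SimpleGraph

variable {V R : Type*} {G : SimpleGraph V}

lemma exists_lt_edist_of_lt_diam {t : ℕ} (ht : t < G.diam) :
    ∃ u v, (t : ℕ∞) < G.edist u v := by
  have hdiam : G.diam ≠ 0 := by omega
  have := nontrivial_of_diam_ne_zero hdiam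
  obtain ⟨u, v, huv⟩ := exists_edist_eq_ediam_of_ne_top (ediam_ne_top_of_diam_ne_zero hdiam)
  exact ⟨u, v, huv ▸ (Nat.cast_lt.2 ht).trans_le (ENat.natCast_toNat_le_self _)⟩

variable [Semiring R]

lemma edist_le_one_of_matrix_apply_ne_zero {B : Matrix V V R}
    (hB : ∀ i j, i ≠ j → ¬ G.Adj i j → B i j = 0) {i j : V} (h : B i j ≠ 0) :
    G.edist i j ≤ 1 := by
  rw [edist_le_one_iff_adj_or_eq]
  by_contra! hij
  exact h (hB i j hij.2 hij.1)

variable [Fintype V] [DecidableEq V]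

lemma list_prod_apply_eq_zero_of_length_lt_edist (L : List (Matrix V V R))
    (hL : ∀ B ∈ L, ∀ i j, i ≠ j → ¬ G.Adj i j → B i j = 0) {i j : V}
    (h : (L.length : ℕ∞) < G.edist i j) : L.prod i j = 0 := by
  induction L generalizing i with
  | nil =>
    have hij : i ≠ j := by rintro rfl; simp at h
    simp [Matrix.one_apply_ne hij]
  | cons B L ih =>
    rw [List.prod_cons, Matrix.mul_apply]
    refine Finset.sum_eq_zero fun k _ => ?_
    by_cases hBik : B i k = 0
    · rw [hBik, zero_mul]
    have hik : G.edist i k ≤ 1 :=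
      edist_le_one_of_matrix_apply_ne_zero (hL B List.mem_cons_self) hBik
    have hkj : (L.length : ℕ∞) < G.edist k j := by
      by_contra! hkj
      have hij_le := calc G.edist i j ≤ G.edist i k + G.edist k j := G.edist_triangle
        _ ≤ 1 + L.length := add_le_add hik hkj
      simp only [List.length_cons, Nat.cast_add, Nat.cast_one] at h
      exact (h.trans_le hij_le).ne (add_comm _ _)
    rw [ih (fun C hC => hL C (List.mem_cons_of_mem _ hC)) hkj, mul_zero]

end SimpleGraph

theorem no_consensus_in_less_than_diam_steps_general {N : ℕ} (G : SimpleGraph (Fin N))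
    (t : ℕ) (ht : t < G.diam) :
    ¬ ∃ A : Fin t → Matrix (Fin N) (Fin N) ℝ,
        (∀ s : Fin t, G.Complies (A s)) ∧
        (List.ofFn A).reverse.prod = Matrix.of (fun _ _ => (N : ℝ)⁻¹) := by
  rintro ⟨A, hA, hprod⟩
  obtain ⟨i, j, hij⟩ := G.exists_lt_edist_of_lt_diam ht
  have hzero := G.list_prod_apply_eq_zero_of_length_lt_edist (List.ofFn A).reverse
    (by simpa [List.mem_ofFn, SimpleGraph.Complies] using hA) (by simpa using hij)
  rw [hprod, Matrix.of_apply, inv_eq_zero, Nat.cast_eq_zero] at hzero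
  exact (hzero ▸ i).elim0

/-- On a connected graph of diameter `D`, no product of fewer than `D`
compliant matrices can equal `(1/N)·𝟙𝟙ᵀ`: linear consensus protocols need at
least `D` iterations. -/
theorem no_consensus_in_less_than_diam_steps {N : ℕ} (G : SimpleGraph (Fin N))
    (hG : G.Connected) (t : ℕ) (ht : t < G.diam) :
    ¬ ∃ A : Fin t → Matrix (Fin N) (Fin N) ℝ,
        (∀ s : Fin t, G.Complies (A s)) ∧
        (List.ofFn A).reverse.prod = Matrix.of (fun _ _ => (N : ℝ)⁻¹) :=
  no_consensus_in_less_than_diam_steps_general G t ht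
end

section
/- There exists a connected simple graph G on 10 vertices with diameter 2 such that no two real 10×10 matrices A, B, each complying with G, satisfy AB = (1/10)·𝟙𝟙ᵀ. Consequently, the definitive consensus conjecture is false: the diameter lower bound for linear consensus protocols is not always tight. -/
/-!
Let `c = 1/10` and suppose `A * B = c·𝟙𝟙ᵀ` with `A`, `B` compliant. An entry `(A * B) i j` only
involves the `k` that lie in the closed neighbourhoods of both `i` and `j`. In the graph below,
`8` is the only such vertex for each of the pairs `(5,0)`, `(2,0)`, `(2,7)`, so
`A₅₈ B₈₀ = A₂₈ B₈₀ = A₂₈ B₈₇ = c`; hence `A₅₈ = A₂₈` and `A₅₈ B₈₇ = c`. Likewise vertex `9`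
and the pairs `(5,1)`, `(6,1)`, `(6,7)` give `A₅₉ B₉₇ = c`. But `5` and `7` are non-adjacent with
common neighbours exactly `8` and `9`, so `(A * B) 5 7 = A₅₈ B₈₇ + A₅₉ B₉₇ = 2c ≠ c`.
-/

open Finset

theorem mul_eq_of_mul_eq_of_mul_eq {R : Type*} [MonoidWithZero R] [IsRightCancelMulZero R]
    {a a' b b' c : R} (hc : c ≠ 0) (h₁ : a * b = c) (h₂ : a' * b = c) (h₃ : a' * b' = c) :
    a * b' = c := by
  have hb : b ≠ 0 := by rintro rfl; exact hc (by rw [← h₁, mul_zero])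
  rwa [mul_right_cancel₀ hb (h₁.trans h₂.symm)]

namespace SimpleGraph

variable {V : Type*} {G : SimpleGraph V}

theorem ediam_le_two (h : ∀ u v, u ≠ v → ¬ G.Adj u v → ∃ w, G.Adj u w ∧ G.Adj w v) :
    G.ediam ≤ 2 := by
  refine ediam_le_of_edist_le fun u v => not_lt.mp fun h₂ => ?_
  obtain ⟨huv, hadj, hempty⟩ := two_lt_edist_iff.mp h₂
  obtain ⟨w, huw, hwv⟩ := h u v huv hadj
  exact (Set.eq_empty_iff_forall_notMem.mp hempty) w ⟨huw, hwv.symm⟩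

theorem ediam_eq_two (h : ∀ u v, u ≠ v → ¬ G.Adj u v → ∃ w, G.Adj u w ∧ G.Adj w v)
    {u v : V} (huv : u ≠ v) (hadj : ¬ G.Adj u v) : G.ediam = 2 := by
  refine (ediam_le_two h).antisymm ?_
  obtain ⟨w, huw, hwv⟩ := h u v huv hadj
  exact (edist_eq_two_iff.mpr ⟨huv, hadj, w, huw, hwv.symm⟩).ge.trans edist_le_ediam

/-- The `k` that can contribute to `(A * B) i j` when `A` and `B` comply with `G`. -/
def IsClosedCommonNeighbor (G : SimpleGraph V) (i j k : V) : Prop :=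
  (k = i ∨ G.Adj i k) ∧ (k = j ∨ G.Adj k j)

instance [DecidableEq V] [DecidableRel G.Adj] (i j k : V) :
    Decidable (G.IsClosedCommonNeighbor i j k) :=
  inferInstanceAs (Decidable (_ ∧ _))

namespace Complies

variable {N : ℕ} {G : SimpleGraph (Fin N)} {A B : Matrix (Fin N) (Fin N) ℝ}

theorem mul_apply_eq_sum (hA : G.Complies A) (hB : G.Complies B) {i j : Fin N}
    (s : Finset (Fin N)) (hs : ∀ k, G.IsClosedCommonNeighbor i j k → k ∈ s) :
    (A * B) i j = ∑ k ∈ s, A i k * B k j := by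
  rw [Matrix.mul_apply]
  refine (sum_subset (subset_univ s) fun k _ hk => ?_).symm
  by_cases hi : k = i ∨ G.Adj i k
  · obtain ⟨hkj, hadj⟩ := not_or.mp fun hj => hk (hs k ⟨hi, hj⟩)
    rw [hB k j hkj hadj, mul_zero]
  · obtain ⟨hki, hadj⟩ := not_or.mp hi
    rw [hA i k (Ne.symm hki) hadj, zero_mul]

theorem mul_apply_eq_of_unique (hA : G.Complies A) (hB : G.Complies B) {i j k : Fin N}
    (h : ∀ l, G.IsClosedCommonNeighbor i j l → l = k) :
    (A * B) i j = A i k * B k j := by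
  rw [hA.mul_apply_eq_sum hB {k} (by simpa using h), sum_singleton]

theorem mul_apply_eq_of_mul_eq_const (hA : G.Complies A) (hB : G.Complies B)
    {c : ℝ} (hc : c ≠ 0) (hAB : A * B = Matrix.of fun _ _ => c) {i i' j j' k : Fin N}
    (h₁ : ∀ l, G.IsClosedCommonNeighbor i j l → l = k)
    (h₂ : ∀ l, G.IsClosedCommonNeighbor i' j l → l = k)
    (h₃ : ∀ l, G.IsClosedCommonNeighbor i' j' l → l = k) :
    A i k * B k j' = c := by
  have entry (p q : Fin N) : (A * B) p q = c := by rw [hAB, Matrix.of_apply]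
  exact mul_eq_of_mul_eq_of_mul_eq hc
    ((hA.mul_apply_eq_of_unique hB h₁).symm.trans (entry i j))
    ((hA.mul_apply_eq_of_unique hB h₂).symm.trans (entry i' j))
    ((hA.mul_apply_eq_of_unique hB h₃).symm.trans (entry i' j'))

end Complies

end SimpleGraph

def counterexampleEdges : List (Fin 10 × Fin 10) :=
  [(0, 4), (0, 7), (0, 8), (1, 3), (1, 7), (1, 9), (2, 3), (2, 6), (2, 8), (3, 4), (3, 8), (3, 9),
    (4, 6), (4, 8), (5, 8), (5, 9), (6, 9), (7, 8), (7, 9)]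

def counterexampleGraph : SimpleGraph (Fin 10) :=
  SimpleGraph.fromRel fun i j => (i, j) ∈ counterexampleEdges

instance : DecidableRel counterexampleGraph.Adj :=
  fun _ _ => inferInstanceAs (Decidable (_ ∧ _))

theorem counterexampleGraph_ediam : counterexampleGraph.ediam = 2 :=
  SimpleGraph.ediam_eq_two (by decide) (u := 5) (v := 7) (by decide) (by decide)

/-- The definitive consensus conjecture is false: there is a connected graph on
10 vertices of diameter 2 on which no product of two compliant matrices equals
`(1/10)·𝟙𝟙ᵀ`. -/
theorem definitive_consensus_conjecture_false :
    ∃ G : SimpleGraph (Fin 10), G.Connected ∧ G.diam = 2 ∧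
      ∀ A B : Matrix (Fin 10) (Fin 10) ℝ, G.Complies A → G.Complies B →
        A * B ≠ Matrix.of (fun _ _ => (10 : ℝ)⁻¹) := by
  refine ⟨counterexampleGraph, ?_, ?_, fun A B hA hB hAB => ?_⟩
  · exact SimpleGraph.connected_of_ediam_ne_top (by simp [counterexampleGraph_ediam])
  · rw [SimpleGraph.diam, counterexampleGraph_ediam]
    rfl
  have hc : (10 : ℝ)⁻¹ ≠ 0 := by norm_num
  have h₈ : A 5 8 * B 8 7 = 10⁻¹ := hA.mul_apply_eq_of_mul_eq_const hB hc hAB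
    (i := 5) (j := 0) (i' := 2) (by decide) (by decide) (by decide)
  have h₉ : A 5 9 * B 9 7 = 10⁻¹ := hA.mul_apply_eq_of_mul_eq_const hB hc hAB
    (i := 5) (j := 1) (i' := 6) (by decide) (by decide) (by decide)
  have h₅₇ := hA.mul_apply_eq_sum hB (i := 5) (j := 7) {8, 9} (by decide)
  rw [hAB, Matrix.of_apply, sum_pair (by decide), h₈, h₉] at h₅₇
  norm_num at h₅₇
end

section
/- Let G be a connected simple graph on N vertices with diameter D, and suppose M ∈ M(G) satisfies: (a) there exists k ∈ ℝ with ker(M − k·I) = ker(Mᵀ − k·I) = {α𝟙 : α ∈ ℝ}; (b) the minimal polynomial m_M(x) of M over ℝ has degree D + 1; and (c) m_M splits over ℝ with roots k, λ₁, …, λ_D. Then each matrix M − λ_t·I (t = 1, …, D) lies in M(G), and their product, taken in any order, equals c·𝟙𝟙ᵀ for a nonzero real constant c (namely c = q(k)/N where q(x) = m_M(x)/(x − k)). -/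
open Polynomial Matrix

/-- If `M` complies with a connected graph `G` of diameter `D`, the eigenspaces
of `M` and `Mᵀ` for some eigenvalue `k` are both exactly the span of `𝟙`, and
the minimal polynomial of `M` has degree `D + 1` and splits over `ℝ` with roots
`k, λ₁, …, λ_D`, then each `M - λ_t·I` complies with `G` and their product in
any order equals `c·𝟙𝟙ᵀ` with `c = q(k)/N ≠ 0`, where `q(x) = m_M(x)/(x-k)`. -/
theorem consensus_matrices_from_minpoly {N : ℕ} (G : SimpleGraph (Fin N))
    (hG : G.Connected) (D : ℕ) (hD : G.diam = D)
    (M : Matrix (Fin N) (Fin N) ℝ) (hM : G.Complies M) (k : ℝ)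
    (hker : ∀ v : Fin N → ℝ, M.mulVec v = k • v ↔ ∃ α : ℝ, v = fun _ => α)
    (hkerT : ∀ v : Fin N → ℝ, Mᵀ.mulVec v = k • v ↔ ∃ α : ℝ, v = fun _ => α)
    (hdeg : (minpoly ℝ M).natDegree = D + 1)
    (lam : Fin D → ℝ)
    (hsplit : minpoly ℝ M = (X - C k) * ∏ s : Fin D, (X - C (lam s))) :
    (∀ s : Fin D, G.Complies (M - lam s • 1)) ∧
    (∏ s : Fin D, (k - lam s)) / N ≠ 0 ∧
    ∀ σ : Equiv.Perm (Fin D),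
      (List.ofFn fun s : Fin D => M - lam (σ s) • 1).prod =
        ((∏ s : Fin D, (k - lam s)) / N) • Matrix.of (fun _ _ => (1 : ℝ)) := by
  classical
  obtain ⟨i₀⟩ : Nonempty (Fin N) := hG.nonempty
  have hNpos : 0 < N := i₀.pos
  have hN : (N : ℝ) ≠ 0 := Nat.cast_ne_zero.mpr hNpos.ne'
  set ones : Fin N → ℝ := fun _ => (1 : ℝ) with hones
  have hMones : M.mulVec ones = k • ones := (hker ones).mpr ⟨1, rfl⟩
  -- powers of M fix the all-ones vector up to k^n
  have hpow : ∀ n : ℕ, (M ^ n).mulVec ones = (k ^ n) • ones := by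
    intro n
    induction n with
    | zero => simp
    | succ n ih =>
      rw [pow_succ, ← Matrix.mulVec_mulVec, hMones, Matrix.mulVec_smul, ih,
        smul_smul, pow_succ, mul_comm]
  -- polynomials in M act on the all-ones vector by evaluation at k
  have hpoly : ∀ p : ℝ[X], (aeval M p).mulVec ones = (p.eval k) • ones := by
    intro p
    induction p using Polynomial.induction_on' with
    | add p q hp hq =>
      rw [map_add, Matrix.add_mulVec, hp, hq, eval_add, add_smul]
    | monomial n a =>
      rw [aeval_monomial, eval_monomial, Algebra.algebraMap_eq_smul_one,
        smul_mul_assoc, one_mul, Matrix.smul_mulVec, hpow, smul_smul]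
  have haev : ∀ a : ℝ, aeval M (X - C a) = M - a • 1 := by
    intro a
    rw [map_sub, aeval_X, aeval_C, Algebra.algebraMap_eq_smul_one]
  set q : ℝ[X] := ∏ s : Fin D, (X - C (lam s)) with hq
  set P : Matrix (Fin N) (Fin N) ℝ := aeval M q with hP
  have hmin := minpoly.aeval ℝ M
  have h1 : (M - k • 1) * P = 0 := by
    rw [hsplit, _root_.map_mul, haev] at hmin; exact hmin
  have h2 : P * (M - k • 1) = 0 := by
    rw [hsplit, mul_comm, _root_.map_mul, haev] at hmin; exact hmin
  have hMP : M * P = k • P := by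
    have h : M * P - (k • (1 : Matrix (Fin N) (Fin N) ℝ)) * P = 0 := by
      rw [← sub_mul]; exact h1
    rw [smul_mul_assoc, one_mul] at h
    exact sub_eq_zero.mp h
  have hPM : P * M = k • P := by
    have h : P * M - P * (k • (1 : Matrix (Fin N) (Fin N) ℝ)) = 0 := by
      rw [← mul_sub]; exact h2
    rw [mul_smul_comm, mul_one] at h
    exact sub_eq_zero.mp h
  -- columns of P are constant
  have hcol : ∀ j, ∃ α : ℝ, (fun i => P i j) = fun _ => α := by
    intro j
    apply (hker _).mp
    funext i
    have h := congrFun (congrFun hMP i) j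
    simpa [Matrix.mul_apply, Matrix.mulVec, dotProduct] using h
  -- rows of P are constant
  have hMPT : Mᵀ * Pᵀ = k • Pᵀ := by
    have h := congrArg Matrix.transpose hPM
    rwa [Matrix.transpose_mul, Matrix.transpose_smul] at h
  have hrow : ∀ i, ∃ β : ℝ, (fun j => P i j) = fun _ => β := by
    intro i
    apply (hkerT _).mp
    funext j
    have h := congrFun (congrFun hMPT j) i
    simpa [Matrix.mul_apply, Matrix.mulVec, dotProduct, Matrix.transpose_apply]
      using h
  have hconst : ∀ i j, P i j = P i₀ i₀ := by
    intro i j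
    obtain ⟨α, hα⟩ := hcol j
    obtain ⟨β, hβ⟩ := hrow i₀
    have e1 := congrFun hα i
    have e2 := congrFun hα i₀
    have e3 := congrFun hβ j
    have e4 := congrFun hβ i₀
    rw [e1, ← e2, e3, ← e4]
  set c' : ℝ := P i₀ i₀ with hc'
  have hqk : q.eval k = ∏ s : Fin D, (k - lam s) := by
    simp [hq, eval_prod]
  have hsum : (N : ℝ) * c' = ∏ s : Fin D, (k - lam s) := by
    have h := congrFun (hpoly q) i₀
    rw [← hP] at h
    simp only [Matrix.mulVec, dotProduct, hones, mul_one, Pi.smul_apply,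
      smul_eq_mul] at h
    calc (N : ℝ) * c' = ∑ _j : Fin N, c' := by
          rw [Finset.sum_const, Finset.card_univ, Fintype.card_fin,
            nsmul_eq_mul]
      _ = ∑ j : Fin N, P i₀ j := by
          refine Finset.sum_congr rfl fun j _ => (hconst i₀ j).symm
      _ = q.eval k * 1 := by rw [h]; ring
      _ = ∏ s : Fin D, (k - lam s) := by rw [mul_one, hqk]
  have hceq : (∏ s : Fin D, (k - lam s)) / N = c' := by
    rw [← hsum, mul_comm, mul_div_assoc, div_self hN, mul_one]
  -- c' ≠ 0
  have hqne : q ≠ 0 := by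
    have : q.Monic := monic_prod_of_monic _ _ fun s _ => monic_X_sub_C _
    exact this.ne_zero
  have hqdeg : q.natDegree = D := by
    rw [hq, Polynomial.natDegree_prod _ _ fun s _ => X_sub_C_ne_zero _]
    simp
  have hc'ne : c' ≠ 0 := by
    intro h0
    have hP0 : P = 0 := by
      ext i j
      simp [hconst i j, h0]
    have hdvd : minpoly ℝ M ∣ q := minpoly.dvd ℝ M (by rw [← hP]; exact hP0)
    have := Polynomial.natDegree_le_of_dvd hdvd hqne
    rw [hdeg, hqdeg] at this
    omega
  refine ⟨?_, ?_, ?_⟩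
  · intro s i j hij hadj
    have h1 : (1 : Matrix (Fin N) (Fin N) ℝ) i j = 0 := Matrix.one_apply_ne hij
    simp [Matrix.sub_apply, Matrix.smul_apply, h1, hM i j hij hadj]
  · rw [hceq]; exact hc'ne
  · intro σ
    have hl : (List.ofFn fun s : Fin D => M - lam (σ s) • 1) =
        List.map (aeval M) (List.ofFn fun s : Fin D => X - C (lam (σ s))) := by
      rw [List.map_ofFn]
      congr 1
      funext s
      exact (haev (lam (σ s))).symm
    rw [hl, ← map_list_prod (aeval M), List.prod_ofFn,
      Equiv.prod_comp σ (fun s => X - C (lam s)), ← hq, ← hP]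
    ext i j
    rw [hconst i j, hceq]
    simp [hones]
end

section
/- Let M be a real N×N matrix and k ∈ ℝ such that ker(M − k·I) = ker(Mᵀ − k·I) = {α𝟙 : α ∈ ℝ}, and let m_M(x) be the minimal polynomial of M over ℝ. Then (x − k) divides m_M(x), and setting q(x) = m_M(x)/(x − k), one has q(M) = (q(k)/N)·𝟙𝟙ᵀ with q(k) ≠ 0. -/
/-!
Since `M 𝟙 = k 𝟙`, every polynomial acts on `𝟙` through its value at `k`; in particular `k` is a
root of `m_M`. Writing `m_M = (x - k) q`, the matrix `A = q(M)` satisfies `M A = A M = k A`, so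
its columns lie in `ker (M - k)` and its rows in `ker (Mᵀ - k)`: both are constant, hence `A` is
a multiple `c 𝟙𝟙ᵀ`, and `A 𝟙 = q(k) 𝟙` gives `N c = q(k)`. Finally `q(M) ≠ 0` because `q` is a
monic proper divisor of `m_M`, so `q(k) ≠ 0`.
-/

open Polynomial Matrix

section DivByMonic
variable {R A : Type*} [CommRing R] [Ring A] [Algebra R A] {a : A} {p : R[X]} {k : R}

theorem mul_aeval_divByMonic_X_sub_C (hp : aeval a p = 0) (hk : p.IsRoot k) :
    a * aeval a (p /ₘ (X - C k)) = k • aeval a (p /ₘ (X - C k)) := by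
  have h := congrArg (aeval a) (mul_divByMonic_eq_iff_isRoot.2 hk)
  rw [map_mul, hp, map_sub, aeval_X, aeval_C, sub_mul, sub_eq_zero] at h
  rw [h, Algebra.smul_def]

theorem aeval_divByMonic_X_sub_C_mul (hp : aeval a p = 0) (hk : p.IsRoot k) :
    aeval a (p /ₘ (X - C k)) * a = k • aeval a (p /ₘ (X - C k)) := by
  have h := congrArg (aeval a) (mul_divByMonic_eq_iff_isRoot.2 hk)
  rw [mul_comm, map_mul, hp, map_sub, aeval_X, aeval_C, mul_sub, sub_eq_zero] at h
  rw [h, Algebra.smul_def, Algebra.commutes]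

theorem aeval_minpoly_divByMonic_X_sub_C_ne_zero [Nontrivial R] (ha : IsIntegral R a)
    (hk : (minpoly R a).IsRoot k) :
    aeval a (minpoly R a /ₘ (X - C k)) ≠ 0 := by
  have hfac := mul_divByMonic_eq_iff_isRoot.2 hk
  have hmonic := (monic_X_sub_C k).of_mul_monic_left (hfac ▸ minpoly.monic ha)
  refine minpoly.aeval_ne_zero_of_dvdNotUnit_minpoly ha hmonic
    ⟨hmonic.ne_zero, X - C k, not_isUnit_X_sub_C k, by rw [mul_comm, hfac]⟩
end DivByMonic

namespace Matrix
variable {n R : Type*} [Fintype n]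

theorem aeval_mulVec_of_mulVec_eq_smul [DecidableEq n] [CommRing R] {M : Matrix n n R} {k : R}
    {v : n → R} (hv : M *ᵥ v = k • v) (p : R[X]) : aeval M p *ᵥ v = p.eval k • v := by
  have h := Module.End.aeval_apply_of_mem_apply_eq_smul (f := toLinAlgEquiv' M) (p := p)
    (by simpa [toLinAlgEquiv'_apply] using hv)
  rwa [aeval_algHom_apply, toLinAlgEquiv'_apply] at h

theorem isRoot_minpoly_of_mulVec_eq_smul [DecidableEq n] {K : Type*} [Field K] {M : Matrix n n K}
    {k : K} {v : n → K} (hv0 : v ≠ 0) (hv : M *ᵥ v = k • v) : (minpoly K M).IsRoot k := by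
  have h := aeval_mulVec_of_mulVec_eq_smul hv (minpoly K M)
  rw [minpoly.aeval, zero_mulVec, eq_comm, smul_eq_zero] at h
  exact h.resolve_right hv0

theorem exists_eq_const_of_mul_eq_smul [Nonempty n] [CommSemiring R] {M A : Matrix n n R} {k : R}
    (hker : ∀ v, M *ᵥ v = k • v → ∃ α, v = fun _ => α)
    (hkerT : ∀ v, Mᵀ *ᵥ v = k • v → ∃ α, v = fun _ => α)
    (hMA : M * A = k • A) (hAM : A * M = k • A) :
    ∃ c : R, A = c • of fun _ _ => (1 : R) := by
  have hcol : ∀ j, ∃ β, (fun i => A i j) = fun _ => β := fun j =>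
    hker _ (funext fun i => congrFun (congrFun hMA i) j)
  have hrow : ∀ i, ∃ α, A i = fun _ => α := fun i =>
    hkerT _ (by rw [mulVec_transpose]; exact funext fun j => congrFun (congrFun hAM i) j)
  obtain i₀ : n := Classical.arbitrary n
  refine ⟨A i₀ i₀, ext fun i j => ?_⟩
  obtain ⟨β, hβ⟩ := hcol j
  obtain ⟨α, hα⟩ := hrow i₀
  calc A i j = A i₀ j := (congrFun hβ i).trans (congrFun hβ i₀).symm
    _ = A i₀ i₀ := (congrFun hα j).trans (congrFun hα i₀).symm
    _ = _ := by simp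

end Matrix

/-- If the eigenspaces of `M` and `Mᵀ` for the eigenvalue `k` are both exactly
the span of the all-ones vector `𝟙`, then `(x - k)` divides the minimal
polynomial `m_M` of `M`, and the quotient `q = m_M/(x - k)` satisfies
`q(M) = (q(k)/N)·𝟙𝟙ᵀ` with `q(k) ≠ 0`. -/
theorem quotient_of_minpoly_eval_eq_ones {N : ℕ} (hN : 0 < N)
    (M : Matrix (Fin N) (Fin N) ℝ) (k : ℝ)
    (hker : ∀ v : Fin N → ℝ, M.mulVec v = k • v ↔ ∃ α : ℝ, v = fun _ => α)
    (hkerT : ∀ v : Fin N → ℝ, Mᵀ.mulVec v = k • v ↔ ∃ α : ℝ, v = fun _ => α) :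
    (X - C k) ∣ minpoly ℝ M ∧
    Polynomial.aeval M (minpoly ℝ M /ₘ (X - C k)) =
      (((minpoly ℝ M /ₘ (X - C k)).eval k) / N) • Matrix.of (fun _ _ => (1 : ℝ)) ∧
    (minpoly ℝ M /ₘ (X - C k)).eval k ≠ 0 := by
  have : NeZero N := ⟨hN.ne'⟩
  have hones : M *ᵥ (fun _ => 1) = k • fun _ => 1 := (hker _).2 ⟨1, rfl⟩
  have hroot := isRoot_minpoly_of_mulVec_eq_smul (fun h => one_ne_zero (congrFun h 0)) hones
  set q := minpoly ℝ M /ₘ (X - C k)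
  obtain ⟨c, hc⟩ := exists_eq_const_of_mul_eq_smul (A := aeval M q)
    (fun v => (hker v).1) (fun v => (hkerT v).1)
    (mul_aeval_divByMonic_X_sub_C (minpoly.aeval ℝ M) hroot)
    (aeval_divByMonic_X_sub_C_mul (minpoly.aeval ℝ M) hroot)
  have hcN : N * c = q.eval k := by
    have h := congrFun (aeval_mulVec_of_mulVec_eq_smul hones q) 0
    simpa [hc, mulVec, dotProduct] using h
  have hq0 : aeval M q ≠ 0 := aeval_minpoly_divByMonic_X_sub_C_ne_zero (.of_finite ℝ M) hroot
  refine ⟨dvd_iff_isRoot.2 hroot, ?_, ?_⟩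
  · rw [hc, ← hcN, mul_div_cancel_left₀ _ (Nat.cast_ne_zero.2 hN.ne')]
  · intro h
    have hc0 : c = 0 := by simpa [hN.ne', ← hcN] using h
    exact hq0 (by rw [hc, hc0, zero_smul])
end

section
/- Let G be a connected simple graph with diameter D(G) and let M ∈ M(G). If there exists a real univariate polynomial p such that every entry of p(M) is nonzero, then the dimension of the algebra A_M = {p(M) : p ∈ ℝ[x]} generated by M is at least D(G) + 1; equivalently, the minimal polynomial of M over ℝ has degree at least D(G) + 1. -/
open Matrix

/-!
The `(i, j)` entry of `M ^ k` is a sum over walks of length `k` from `i` to `j`, so it vanishes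
when `k < dist i j`; hence so does the `(i, j)` entry of every polynomial in `M` of degree less
than `dist i j`. Reducing `p` modulo the minimal polynomial `m` of `M` does not change `p(M)`, so
`p(M)` is a polynomial in `M` of degree `< deg m`; if its `(u, v)` entry is nonzero for a pair
at distance `D(G)`, then `D(G) < deg m`. Finally `1, M, …, M ^ (deg m - 1)` is a basis of the
algebra generated by `M`.
-/

open Polynomial

theorem IsIntegral.span_range_pow_eq_span_range_pow_fin {K S : Type*} [Field K] [Ring S]
    [Algebra K S] {x : S} (hx : IsIntegral K x) :
    Submodule.span K (Set.range fun n : ℕ => x ^ n) =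
      Submodule.span K (Set.range fun i : Fin (minpoly K x).natDegree => x ^ (i : ℕ)) :=
  le_antisymm
    (Submodule.span_le.mpr <| Set.range_subset_iff.mpr fun n =>
      hx.mem_span_pow ⟨X ^ n, by simp⟩)
    (Submodule.span_mono <| Set.range_subset_iff.mpr fun i => ⟨i, rfl⟩)

theorem IsIntegral.finrank_span_range_pow {K S : Type*} [Field K] [Ring S]
    [Algebra K S] {x : S} (hx : IsIntegral K x) :
    Module.finrank K (Submodule.span K (Set.range fun n : ℕ => x ^ n)) =
      (minpoly K x).natDegree := by
  rw [hx.span_range_pow_eq_span_range_pow_fin,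
    finrank_span_eq_card (linearIndependent_pow x), Fintype.card_fin]

namespace SimpleGraph

variable {V : Type*} [Fintype V] [DecidableEq V] {G : SimpleGraph V}

theorem pow_apply_eq_zero_of_lt_edist {R : Type*} [Semiring R] {A : Matrix V V R}
    (hA : ∀ i j, i ≠ j → ¬ G.Adj i j → A i j = 0) (k : ℕ) {i j : V} (hk : k < G.edist i j) :
    (A ^ k) i j = 0 := by
  induction k generalizing j with
  | zero =>
    exact one_apply_ne (G.edist_eq_zero_iff.not.mp (by simpa using hk.ne'))
  | succ k ih =>
    rw [pow_succ, mul_apply]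
    refine Finset.sum_eq_zero fun l _ => ?_
    by_cases hil : (k : ℕ∞) < G.edist i l
    · rw [ih hil, zero_mul]
    · have hlj : 1 < G.edist l j := by
        by_contra! hlj
        have := (G.edist_triangle (v := l)).trans (add_le_add (not_lt.mp hil) hlj)
        exact (hk.trans_le this).ne (Nat.cast_succ k)
      have hnot : ¬ (G.Adj l j ∨ l = j) := edist_le_one_iff_adj_or_eq.not.mp hlj.not_ge
      push Not at hnot
      rw [hA l j hnot.2 hnot.1, mul_zero]

theorem aeval_apply_eq_zero_of_natDegree_lt_edist {R : Type*} [CommSemiring R]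
    {A : Matrix V V R} (hA : ∀ i j, i ≠ j → ¬ G.Adj i j → A i j = 0) {q : R[X]} {i j : V}
    (hq : q.natDegree < G.edist i j) : aeval A q i j = 0 := by
  rw [aeval_eq_sum_range, Matrix.sum_apply]
  refine Finset.sum_eq_zero fun k hk_mem => ?_
  have hk : (k : ℕ∞) < G.edist i j :=
    lt_of_le_of_lt (by exact_mod_cast Nat.lt_succ_iff.mp (Finset.mem_range.mp hk_mem)) hq
  rw [Matrix.smul_apply, pow_apply_eq_zero_of_lt_edist hA k hk, smul_zero]

theorem edist_lt_natDegree_minpoly {K : Type*} [Field K] {A : Matrix V V K}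
    (hA : ∀ i j, i ≠ j → ¬ G.Adj i j → A i j = 0) {p : K[X]} {i j : V}
    (hp : aeval A p i j ≠ 0) : G.edist i j < (minpoly K A).natDegree := by
  rw [← minpoly.aeval_modByMonic_minpoly] at hp
  have hmod : p %ₘ minpoly K A ≠ 0 := by
    rintro h
    simp [h] at hp
  have hdeg : (p %ₘ minpoly K A).natDegree < (minpoly K A).natDegree :=
    natDegree_lt_natDegree hmod
      (degree_modByMonic_lt p (minpoly.monic (Algebra.IsIntegral.isIntegral A)))
  calc G.edist i j ≤ (p %ₘ minpoly K A).natDegree :=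
        not_lt.mp fun h => hp (aeval_apply_eq_zero_of_natDegree_lt_edist hA h)
    _ < (minpoly K A).natDegree := by exact_mod_cast hdeg

end SimpleGraph

/-- If `M` complies with a connected graph `G` and some real polynomial of `M`
has no zero entry, then the algebra generated by `M` (the span of the powers of
`M`) has dimension at least `D(G) + 1`; equivalently, the minimal polynomial of
`M` has degree at least `D(G) + 1`. -/
theorem dim_algebra_ge_diam_add_one {N : ℕ} (G : SimpleGraph (Fin N))
    (hG : G.Connected) (M : Matrix (Fin N) (Fin N) ℝ) (hM : G.Complies M)
    (p : Polynomial ℝ) (hp : ∀ i j : Fin N, (Polynomial.aeval M p) i j ≠ 0) :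
    G.diam + 1 ≤ Module.finrank ℝ
        (Submodule.span ℝ (Set.range fun n : ℕ => M ^ n)) ∧
    G.diam + 1 ≤ (minpoly ℝ M).natDegree := by
  have : Nonempty (Fin N) := hG.nonempty
  obtain ⟨u, v, huv⟩ := G.exists_dist_eq_diam
  have hdiam : G.diam < (minpoly ℝ M).natDegree := by
    have := G.edist_lt_natDegree_minpoly hM (hp u v)
    rwa [← (hG u v).coe_dist_eq_edist, huv, Nat.cast_lt] at this
  rw [(Algebra.IsIntegral.isIntegral M).finrank_span_range_pow]
  exact ⟨hdiam, hdiam⟩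
end

section
/- Let P_N be the path graph on N ≥ 2 vertices, labeled so that vertices 1 and N are its two endpoints (of degree one), with adjacency matrix A. Let M = A + diag(1, 0, …, 0, 1), i.e., A with the (1,1) and (N,N) diagonal entries set to 1. Then M has N distinct real eigenvalues; one of them is 2 and, writing the remaining eigenvalues as λ₁, …, λ_{N−1}, one has (M − λ_{N−1}·I) ⋯ (M − λ₁·I) = 𝟙𝟙ᵀ. -/
/-! The vectors `v_k j = cos ((2j + 1) kπ / 2N)`, `k < N`, satisfy `v_k(j - 1) + v_k(j + 1) =
2 cos (kπ/N) v_k(j)`, and their extensions to `j = -1` and `j = N` reflect at both ends, which is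
exactly what the two diagonal ones of `M` encode. So they are eigenvectors with the pairwise
distinct eigenvalues `2 cos (kπ/N)`, hence an eigenbasis, and `v_0 = 𝟙` has eigenvalue `2`.
On this basis both sides of the claimed identity agree: for `k ≥ 1` the product contains the
factor `M - λ_k` killing `v_k`, while `𝟙𝟙ᵀ v_k = 0` because eigenvectors of the symmetric `M`
for different eigenvalues are orthogonal; and both send `𝟙` to `N • 𝟙`, since
`∏_{k ≥ 1} (2 - 2 cos (kπ/N)) = 2^(N-1) ∏_{k ≥ 1} (1 - cos (kπ/N))` is the value at `1` of the
Chebyshev polynomial `U_{N-1}`, whose roots are the `cos (kπ/N)`. -/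

open Matrix

section Eigenvectors

variable {n ι K : Type*} [Fintype n] [Field K]

theorem Matrix.list_prod_sub_smul_one_mulVec [DecidableEq n] {M : Matrix n n K} {μ : K}
    {v : n → K} (hv : M *ᵥ v = μ • v) (l : List K) :
    (l.map fun a => M - a • 1).prod *ᵥ v = (l.map fun a => μ - a).prod • v := by
  induction l with
  | nil => simp
  | cons a l ih =>
    simp only [List.map_cons, List.prod_cons, ← mulVec_mulVec, ih, mulVec_smul, sub_mulVec,
      smul_mulVec, one_mulVec, hv, smul_smul, ← sub_smul, mul_comm]

theorem Matrix.dotProduct_eq_zero_of_mulVec_eq_smul {M : Matrix n n K} (hM : Mᵀ = M)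
    {μ ν : K} {u v : n → K} (hu : M *ᵥ u = μ • u) (hv : M *ᵥ v = ν • v) (hμν : μ ≠ ν) :
    u ⬝ᵥ v = 0 := by
  have h : μ * (u ⬝ᵥ v) = ν * (u ⬝ᵥ v) := by
    rw [← smul_eq_mul, ← smul_dotProduct, ← hu, ← smul_eq_mul, ← dotProduct_smul, ← hv,
      dotProduct_mulVec, ← mulVec_transpose, hM]
  by_contra h₀
  exact hμν (mul_right_cancel₀ h₀ h)

theorem Matrix.linearIndependent_of_mulVec_eq_smul {M : Matrix n n K} {e : ι → K}
    {v : ι → n → K} (he : Function.Injective e) (hv : ∀ i, M *ᵥ v i = e i • v i)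
    (hv_ne : ∀ i, v i ≠ 0) : LinearIndependent K v :=
  Module.End.eigenvectors_linearIndependent' M.mulVecLin e he v
    fun i => ⟨Module.End.mem_eigenspace_iff.2 (hv i), hv_ne i⟩

theorem Matrix.ext_of_mulVec_eq_of_linearIndependent [DecidableEq n] [Fintype ι]
    {v : ι → n → K} (hv : LinearIndependent K v) (hcard : Fintype.card ι = Fintype.card n)
    {A B : Matrix n n K} (h : ∀ i, A *ᵥ v i = B *ᵥ v i) : A = B :=
  toLin'.injective <| LinearMap.ext_on_range
    (hv.span_eq_top_of_card_eq_finrank' (by simpa using hcard)) fun i => by simpa using h i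

theorem Matrix.setOf_mulVec_eq_smul_eq_range [Fintype ι] {M : Matrix n n K} {e : ι → K}
    {v : ι → n → K} (he : Function.Injective e) (hv : ∀ i, M *ᵥ v i = e i • v i)
    (hv_ne : ∀ i, v i ≠ 0) (hcard : Fintype.card ι = Fintype.card n) :
    {μ | ∃ u : n → K, u ≠ 0 ∧ M *ᵥ u = μ • u} = Set.range e := by
  refine Set.Subset.antisymm ?_ (Set.range_subset_iff.2 fun i => ⟨v i, hv_ne i, hv i⟩)
  rintro μ ⟨u, hu₀, hu⟩
  by_contra hμ
  have he' : Function.Injective fun o : Option ι => o.elim μ e := by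
    rintro (_ | i) (_ | j) h
    · rfl
    · exact (hμ ⟨j, h.symm⟩).elim
    · exact (hμ ⟨i, h⟩).elim
    · exact congrArg some (he h)
  have hli := linearIndependent_of_mulVec_eq_smul (M := M) he' (v := fun o => o.elim u v)
    (by rintro (_ | i) <;> simp [hu, hv]) (by rintro (_ | i) <;> simp [hu₀, hv_ne])
  simpa [hcard] using hli.fintype_card_le_finrank

theorem Matrix.reverse_prod_ofFn_sub_smul_one_mulVec [DecidableEq n] {m : ℕ} {M : Matrix n n K}
    {μ : K} {v : n → K} (hv : M *ᵥ v = μ • v) (lam : Fin m → K) :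
    (List.ofFn fun t => M - lam t • 1).reverse.prod *ᵥ v = (∏ t, (μ - lam t)) • v := by
  have h : (List.ofFn fun t => M - lam t • 1) = (List.ofFn lam).map fun a => M - a • 1 := by
    rw [List.map_ofFn]
    rfl
  rw [h, ← List.map_reverse,
    list_prod_sub_smul_one_mulVec hv, List.map_reverse, List.prod_reverse, List.map_ofFn,
    List.prod_ofFn]
  rfl

end Eigenvectors

theorem Matrix.of_one_mulVec {m n R : Type*} [Fintype n] [Semiring R] (w : n → R) :
    (of fun _ _ => 1 : Matrix m n R) *ᵥ w = (1 ⬝ᵥ w) • 1 := by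
  ext
  simp [mulVec, dotProduct]

open Real Finset

open Polynomial Polynomial.Chebyshev in
theorem prod_range_two_sub_two_cos (n : ℕ) :
    ∏ k ∈ range n, (2 - 2 * cos ((k + 1) * π / (n + 1))) = n + 1 := by
  have hinj : Set.InjOn (fun k : ℕ => cos ((k + 1) * π / (n + 1))) (range n) :=
    (range n).nodup_map_iff_injOn.mp (roots_U_real_nodup n)
  have hroots : Multiset.card (U ℝ n).roots = (U ℝ n).natDegree := by
    rw [roots_U_real, natDegree_U_natCast, card_val, card_image_of_injOn hinj, card_range]
  have h := congrArg (eval 1) (C_leadingCoeff_mul_prod_multiset_X_sub_C hroots)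
  rw [eval_mul, eval_C, eval_multiset_prod, Multiset.map_map, leadingCoeff_U_natCast, U_eval_one,
    roots_U_real, ← Finset.prod_eq_multiset_prod, prod_image hinj] at h
  push_cast at h
  simp only [Function.comp_apply, eval_sub, eval_X, eval_C] at h
  calc ∏ k ∈ range n, (2 - 2 * cos ((k + 1) * π / (n + 1)))
      = ∏ k ∈ range n, (2 * (1 - cos ((k + 1) * π / (n + 1)))) := prod_congr rfl fun _ _ => by ring
    _ = n + 1 := by rw [prod_mul_distrib, prod_const, card_range, h]

theorem Fin.sum_ite_intCast_eq {M : Type*} [AddCommMonoid M] (N : ℕ) (a : ℤ) (c : M) :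
    ∑ j : Fin N, (if ((j : ℕ) : ℤ) = a then c else 0) = if 0 ≤ a ∧ a < N then c else 0 := by
  split_ifs with ha
  · lift a to ℕ using ha.1
    rw [sum_eq_single_of_mem ⟨a, by omega⟩ (mem_univ _) fun j _ hj => if_neg ?_, if_pos rfl]
    exact fun h => hj (Fin.ext (by exact_mod_cast h))
  · exact sum_eq_zero fun j _ => if_neg (by omega)

open scoped Classical in
noncomputable def pathGraphShiftedAdjMatrix (N : ℕ) : Matrix (Fin N) (Fin N) ℝ :=
  (SimpleGraph.pathGraph N).adjMatrix ℝ +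
    diagonal fun i : Fin N => if (i : ℕ) = 0 ∨ (i : ℕ) = N - 1 then 1 else 0

section

open scoped Classical

variable {N : ℕ}

theorem pathGraphShiftedAdjMatrix_transpose :
    (pathGraphShiftedAdjMatrix N)ᵀ = pathGraphShiftedAdjMatrix N := by
  simp [pathGraphShiftedAdjMatrix]

theorem pathGraphShiftedAdjMatrix_mulVec_apply (hN : 2 ≤ N) {g : ℤ → ℝ} (hg₀ : g (-1) = g 0)
    (hgN : g N = g (N - 1)) (i : Fin N) :
    (pathGraphShiftedAdjMatrix N *ᵥ fun j => g j) i = g (i - 1) + g (i + 1) := by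
  have hadj : ∀ j : Fin N, (SimpleGraph.pathGraph N).adjMatrix ℝ i j * g j =
      (if ((j : ℕ) : ℤ) = i - 1 then g (i - 1) else 0) +
        (if ((j : ℕ) : ℤ) = i + 1 then g (i + 1) else 0) := by
    intro j
    simp only [SimpleGraph.adjMatrix_apply, SimpleGraph.pathGraph_adj]
    split_ifs <;> first | omega | simp_all
  rw [pathGraphShiftedAdjMatrix, add_mulVec, Pi.add_apply, mulVec_diagonal]
  simp only [mulVec, dotProduct, hadj, sum_add_distrib, Fin.sum_ite_intCast_eq]
  split_ifs <;> first | omega | skip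
  · ring
  · rw [show ((i : ℕ) : ℤ) = N - 1 by omega, sub_add_cancel, hgN]
    ring
  · rw [show ((i : ℕ) : ℤ) = 0 by omega, zero_sub, hg₀]
    ring

noncomputable def pathEigenvalue (N k : ℕ) : ℝ := 2 * cos (k * π / N)

noncomputable def pathEigenvector (N k : ℕ) : Fin N → ℝ :=
  fun j => cos ((2 * j + 1) * (k * π / (2 * N)))

theorem pathGraphShiftedAdjMatrix_mulVec_pathEigenvector (hN : 2 ≤ N) (k : ℕ) :
    pathGraphShiftedAdjMatrix N *ᵥ pathEigenvector N k =
      pathEigenvalue N k • pathEigenvector N k := by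
  have hN₀ : (N : ℝ) ≠ 0 := by positivity
  set α := k * π / (2 * N)
  let g : ℤ → ℝ := fun j => cos ((2 * j + 1) * α)
  have hg₀ : g (-1) = g 0 := by
    simp only [g]
    rw [← cos_neg]
    norm_num
  have hgN : g N = g (N - 1) := by
    simp only [g]
    rw [← cos_nat_mul_two_pi_sub _ k]
    congr 1
    simp only [α]
    field_simp
    push_cast
    ring
  have hv : pathEigenvector N k = fun j : Fin N => g j := by
    ext j
    simp [pathEigenvector, g, α]
  ext i
  rw [hv, pathGraphShiftedAdjMatrix_mulVec_apply hN hg₀ hgN, Pi.smul_apply, smul_eq_mul,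
    cos_add_cos, pathEigenvalue]
  have hsum : ((2 * ((i - 1 : ℤ) : ℝ) + 1) * α + (2 * ((i + 1 : ℤ) : ℝ) + 1) * α) / 2 =
      (2 * ((i : ℤ) : ℝ) + 1) * α := by push_cast; ring
  have hdiff : ((2 * ((i - 1 : ℤ) : ℝ) + 1) * α - (2 * ((i + 1 : ℤ) : ℝ) + 1) * α) / 2 =
      -(k * π / N) := by simp only [α]; push_cast; field_simp; ring
  rw [hsum, hdiff, cos_neg]
  ring

@[simp]
theorem pathEigenvalue_zero : pathEigenvalue N 0 = 2 := by
  simp [pathEigenvalue]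

@[simp]
theorem pathEigenvector_zero : pathEigenvector N 0 = 1 := by
  ext j
  simp [pathEigenvector]

theorem pathEigenvector_ne_zero {k : ℕ} (hk : k < N) : pathEigenvector N k ≠ 0 := by
  have hk' : (k : ℝ) < N := by exact_mod_cast hk
  have h₀ : pathEigenvector N k ⟨0, by omega⟩ = cos (k * π / (2 * N)) := by
    simp [pathEigenvector]
  refine Function.ne_iff.2 ⟨⟨0, by omega⟩, h₀ ▸ (cos_pos_of_mem_Ioo ⟨?_, ?_⟩).ne'⟩
  · have : 0 ≤ (k : ℝ) * π / (2 * N) := by positivity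
    linarith [pi_pos]
  · rw [div_lt_iff₀ (by linarith [k.cast_nonneg (α := ℝ)])]
    nlinarith [pi_pos]

theorem pathEigenvalue_injective : Function.Injective fun k : Fin N => pathEigenvalue N k := by
  intro k l h
  have hN : (0 : ℝ) < N := by exact_mod_cast k.pos
  have hmem : ∀ k : Fin N, (k : ℝ) * π / N ∈ Set.Icc 0 π := fun k => by
    have : (k : ℝ) ≤ N := by exact_mod_cast k.isLt.le
    constructor
    · positivity
    · rw [div_le_iff₀ hN]
      nlinarith [pi_pos]
  have := injOn_cos (hmem k) (hmem l) (by simpa [pathEigenvalue] using h)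
  field_simp at this
  exact Fin.ext (by exact_mod_cast this)

end

theorem prod_two_sub_pathEigenvalue_succ (n : ℕ) :
    ∏ t : Fin n, (2 - pathEigenvalue (n + 1) (t + 1)) = n + 1 := by
  rw [Fin.prod_univ_eq_prod_range (fun t => 2 - pathEigenvalue (n + 1) (t + 1)),
    ← prod_range_two_sub_two_cos]
  simp [pathEigenvalue]

open scoped Classical in
/-- For the path graph on `N ≥ 2` vertices with adjacency matrix `A`, the
matrix `M = A + diag(1,0,…,0,1)` has `N` distinct real eigenvalues, one of
which is `2`, and the product of the factors `M - λ·I` over the `N - 1`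
remaining eigenvalues `λ` equals the all-ones matrix `𝟙𝟙ᵀ`. -/
theorem path_graph_shifted_adjacency_consensus {N : ℕ} (hN : 2 ≤ N)
    (M : Matrix (Fin N) (Fin N) ℝ)
    (hMdef : M = (SimpleGraph.pathGraph N).adjMatrix ℝ +
      Matrix.diagonal (fun i : Fin N => if (i : ℕ) = 0 ∨ (i : ℕ) = N - 1 then (1 : ℝ) else 0)) :
    ∃ lam : Fin (N - 1) → ℝ, Function.Injective lam ∧ (∀ t, lam t ≠ 2) ∧
      {μ : ℝ | ∃ v : Fin N → ℝ, v ≠ 0 ∧ M.mulVec v = μ • v} = insert 2 (Set.range lam) ∧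
      (List.ofFn fun t : Fin (N - 1) => M - lam t • 1).reverse.prod =
        Matrix.of (fun _ _ => (1 : ℝ)) := by
  obtain ⟨n, rfl⟩ : ∃ n, N = n + 1 := ⟨N - 1, by omega⟩
  rw [Nat.add_sub_cancel]
  replace hMdef : M = pathGraphShiftedAdjMatrix (n + 1) := hMdef
  subst hMdef
  set e : Fin (n + 1) → ℝ := fun k => pathEigenvalue (n + 1) k
  set v : Fin (n + 1) → Fin (n + 1) → ℝ := fun k => pathEigenvector (n + 1) k
  have hv : ∀ k, pathGraphShiftedAdjMatrix (n + 1) *ᵥ v k = e k • v k := fun k =>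
    pathGraphShiftedAdjMatrix_mulVec_pathEigenvector hN k
  have he : Function.Injective e := pathEigenvalue_injective
  have hv_ne : ∀ k, v k ≠ 0 := fun k => pathEigenvector_ne_zero k.isLt
  have he₀ : e 0 = 2 := pathEigenvalue_zero
  have hv₀ : v 0 = 1 := pathEigenvector_zero
  refine ⟨Fin.tail e, he.comp (Fin.succ_injective _),
    fun t h => Fin.succ_ne_zero t (he (h.trans he₀.symm)), ?_, ?_⟩
  · rw [setOf_mulVec_eq_smul_eq_range he hv hv_ne rfl, Fin.range_fin_succ, he₀]
  · refine ext_of_mulVec_eq_of_linearIndependent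
      (linearIndependent_of_mulVec_eq_smul he hv hv_ne) rfl fun k => ?_
    rw [reverse_prod_ofFn_sub_smul_one_mulVec (hv k), of_one_mulVec]
    cases k using Fin.cases with
    | zero =>
      have hprod : ∏ t, (2 - Fin.tail e t) = n + 1 := prod_two_sub_pathEigenvalue_succ n
      rw [he₀, hv₀, hprod, one_dotProduct_one, Fintype.card_fin, Nat.cast_succ]
    | succ s =>
      have horth := dotProduct_eq_zero_of_mulVec_eq_smul pathGraphShiftedAdjMatrix_transpose
        (hv 0) (hv s.succ) (he.ne (Fin.succ_ne_zero s).symm)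
      rw [hv₀] at horth
      rw [horth, prod_eq_zero (mem_univ s) (sub_self _), zero_smul, zero_smul]
end

section
/- Let P_N be the path graph on N ≥ 2 vertices. There exist N − 1 real matrices A^(1), …, A^(N−1), each complying with P_N, such that A^(N−1) ⋯ A^(1) = (1/N)·𝟙𝟙ᵀ. Since P_N has diameter N − 1, path graphs satisfy the definitive consensus conjecture. -/
/-!
Averaging the coordinates of an interval `[a, b]` of the path (and fixing the others) factors as
`X * A * Y`, where `A` averages over `[a + 1, b - 1]`, `Y` moves the values at the endpoints `a`, `b`
onto their neighbours, and `X` copies the interior values back to the endpoints and rescales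
everything in `[a, b]` by `(b - a - 1) / (b - a + 1)`. Both `X` and `Y` only use edges of the path,
so peeling off both endpoints costs two matrices; since an interval of two vertices is averaged
by a single compliant matrix, induction gives `b - a` matrices for `[a, b]`, i.e. `N - 1` for
the whole path. Its diameter is `N - 1` because a walk moves by at most one vertex per step.
-/

open Matrix

open Finset

section Averaging

variable {ι : Type*} [DecidableEq ι]

noncomputable def averagingMatrix (s : Finset ι) : Matrix ι ι ℝ :=
  of fun i j => if i ∈ s then (if j ∈ s then (#s : ℝ)⁻¹ else 0) else (1 : Matrix ι ι ℝ) i j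

theorem averagingMatrix_singleton (a : ι) : averagingMatrix {a} = 1 := by
  ext i j
  by_cases hi : i = a <;> by_cases hj : j = a <;> subst_vars <;>
    simp [averagingMatrix, one_apply, Ne.symm, *]

theorem averagingMatrix_univ [Fintype ι] :
    averagingMatrix (univ : Finset ι) = of fun _ _ => (Fintype.card ι : ℝ)⁻¹ := by
  ext i j
  simp [averagingMatrix]

theorem one_submatrix_mul_mul_one_submatrix [Fintype ι] {α : Type*} [NonAssocSemiring α]
    (M : Matrix ι ι α) (σ : ι → ι) :
    (1 : Matrix ι ι α).submatrix σ id * (M * (1 : Matrix ι ι α).submatrix id σ) =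
      M.submatrix σ σ := by
  ext i j
  simp [mul_apply, one_apply]

theorem averagingMatrix_submatrix {s t : Finset ι} {σ : ι → ι} (hst : s ⊆ t)
    (hσt : ∀ i ∈ t, σ i ∈ s) (hσ : ∀ i ∉ t, σ i = i) :
    (averagingMatrix s).submatrix σ σ =
      of fun i j => if i ∈ t then (if j ∈ t then (#s : ℝ)⁻¹ else 0) else (1 : Matrix ι ι ℝ) i j := by
  have hmem : ∀ i, σ i ∈ s ↔ i ∈ t := fun i => by
    by_cases hi : i ∈ t
    · simp [hi, hσt i hi]
    · simp only [hi, hσ i hi, iff_false]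
      exact fun h => hi (hst h)
  ext i j
  by_cases hi : i ∈ t
  · simp [averagingMatrix, hmem, hi]
  · have his : i ∉ s := fun h => hi (hst h)
    have hij : i = σ j ↔ i = j := by
      by_cases hj : j ∈ t
      · exact iff_of_false (fun h => his (h ▸ hσt j hj)) (fun h => hi (h ▸ hj))
      · rw [hσ j hj]
    simp [averagingMatrix, hi, his, hσ i hi, one_apply, hij]

theorem averagingMatrix_eq_mul_mul [Fintype ι] {s t : Finset ι} {σ : ι → ι} (hst : s ⊆ t)
    (hσt : ∀ i ∈ t, σ i ∈ s) (hσ : ∀ i ∉ t, σ i = i) :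
    averagingMatrix t = diagonal (fun i => if i ∈ t then (#s / #t : ℝ) else 1) *
      (1 : Matrix ι ι ℝ).submatrix σ id * averagingMatrix s * (1 : Matrix ι ι ℝ).submatrix id σ := by
  simp only [Matrix.mul_assoc]
  rw [one_submatrix_mul_mul_one_submatrix, averagingMatrix_submatrix hst hσt hσ]
  ext i j
  by_cases hi : i ∈ t
  · have : (#s : ℝ) ≠ 0 := Nat.cast_ne_zero.2 (card_ne_zero_of_mem (hσt i hi))
    by_cases hj : j ∈ t <;> simp [averagingMatrix, hi, hj]
    field_simp
  · simp [averagingMatrix, hi]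

end Averaging

namespace SimpleGraph

variable {N : ℕ} {G : SimpleGraph (Fin N)}

theorem Complies.diagonal_mul {M : Matrix (Fin N) (Fin N) ℝ} (hM : G.Complies M)
    (d : Fin N → ℝ) : G.Complies (diagonal d * M) := fun i j hij hadj => by
  simp [hM i j hij hadj]

theorem complies_one_submatrix_left {σ : Fin N → Fin N} (hσ : ∀ i, σ i ≠ i → G.Adj i (σ i)) :
    G.Complies ((1 : Matrix (Fin N) (Fin N) ℝ).submatrix σ id) := by
  rintro i j hij hadj
  rw [submatrix_apply, id, one_apply_ne]
  rintro rfl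
  exact hadj (hσ i (Ne.symm hij))

theorem complies_one_submatrix_right {σ : Fin N → Fin N} (hσ : ∀ i, σ i ≠ i → G.Adj i (σ i)) :
    G.Complies ((1 : Matrix (Fin N) (Fin N) ℝ).submatrix id σ) := by
  rintro i j hij hadj
  rw [submatrix_apply, id, one_apply_ne]
  rintro rfl
  exact hadj (hσ j hij).symm

theorem IsClique.complies_averagingMatrix {s : Finset (Fin N)}
    (hs : G.IsClique (s : Set (Fin N))) : G.Complies (averagingMatrix s) := by
  intro i j hij hadj
  have : ¬ (i ∈ s ∧ j ∈ s) := fun h => hadj (hs h.1 h.2 hij)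
  by_cases hi : i ∈ s <;> simp_all [averagingMatrix, one_apply_ne hij]

theorem exists_complies_averagingMatrix_eq_mul_mul {s t : Finset (Fin N)} {σ : Fin N → Fin N}
    (hst : s ⊆ t) (hσt : ∀ i ∈ t, σ i ∈ s) (hσ : ∀ i ∉ t, σ i = i)
    (hadj : ∀ i, σ i ≠ i → G.Adj i (σ i)) :
    ∃ X Y, G.Complies X ∧ G.Complies Y ∧ averagingMatrix t = X * averagingMatrix s * Y :=
  ⟨_, _, (complies_one_submatrix_left hadj).diagonal_mul _, complies_one_submatrix_right hadj,
    averagingMatrix_eq_mul_mul hst hσt hσ⟩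

theorem pathGraph_isClique_Icc {a b : Fin N} (h : (b : ℕ) = a + 1) :
    (pathGraph N).IsClique (Icc a b : Set (Fin N)) := by
  intro i hi j hj hij
  simp only [coe_Icc, Set.mem_Icc, Fin.le_def, ne_eq, Fin.ext_iff] at hi hj hij
  rw [pathGraph_adj]
  omega

theorem exists_pathGraph_retraction_Icc {a b a' b' : Fin N} (ha : (a' : ℕ) = a + 1)
    (hb : (b : ℕ) = b' + 1) (hab : a' ≤ b') :
    ∃ σ : Fin N → Fin N, (∀ i ∈ Icc a b, σ i ∈ Icc a' b') ∧ (∀ i ∉ Icc a b, σ i = i) ∧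
      ∀ i, σ i ≠ i → (pathGraph N).Adj i (σ i) := by
  refine ⟨fun i => if i = a then a' else if i = b then b' else i, fun i hi => ?_,
    fun i hi => ?_, fun i hi => ?_⟩ <;>
  simp only [mem_Icc, Fin.le_def, Fin.ext_iff, pathGraph_adj, ne_eq] at * <;>
  split_ifs at * <;> omega

theorem exists_pathGraph_complies_prod_eq_averagingMatrix_Icc :
    ∀ (d : ℕ) (a b : Fin N), (b : ℕ) = a + d → ∃ L : List (Matrix (Fin N) (Fin N) ℝ),
      L.length = d ∧ (∀ A ∈ L, (pathGraph N).Complies A) ∧ L.prod = averagingMatrix (Icc a b)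
  | 0, a, b, h => ⟨[], rfl, by simp, by simp [Fin.ext h, averagingMatrix_singleton]⟩
  | 1, a, b, h => ⟨[averagingMatrix (Icc a b)], rfl,
      by simpa using (pathGraph_isClique_Icc h).complies_averagingMatrix, by simp⟩
  | d + 2, a, b, h => by
    obtain ⟨a', ha'⟩ : ∃ a' : Fin N, (a' : ℕ) = a + 1 := ⟨⟨a + 1, by omega⟩, rfl⟩
    obtain ⟨b', hb'⟩ : ∃ b' : Fin N, (b : ℕ) = b' + 1 := ⟨⟨b - 1, by omega⟩, by simp; omega⟩
    obtain ⟨L, hlen, hL, hprod⟩ :=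
      exists_pathGraph_complies_prod_eq_averagingMatrix_Icc d a' b' (by omega)
    obtain ⟨σ, hσt, hσ, hadj⟩ := exists_pathGraph_retraction_Icc ha' hb' (Fin.le_def.2 (by omega))
    obtain ⟨X, Y, hX, hY, hXY⟩ := exists_complies_averagingMatrix_eq_mul_mul
      (Icc_subset_Icc (Fin.le_def.2 (by omega)) (Fin.le_def.2 (by omega))) hσt hσ hadj
    refine ⟨X :: L ++ [Y], by simp [hlen], ?_, by simp [hprod, hXY, Matrix.mul_assoc]⟩
    simpa [or_imp, forall_and] using ⟨hX, hL, hY⟩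

theorem Walk.val_le_add_length_of_pathGraph {u v : Fin N} (p : (pathGraph N).Walk u v) :
    (v : ℕ) ≤ u + p.length := by
  induction p with
  | nil => simp
  | cons h _ ih =>
    rw [pathGraph_adj] at h
    rw [Walk.length_cons]
    omega

theorem pathGraph_dist_le {u v : Fin N} (h : u ≤ v) : (pathGraph N).dist u v ≤ v - u := by
  obtain ⟨d, hd⟩ : ∃ d, (v : ℕ) = u + d := ⟨v - u, by omega⟩
  induction d generalizing v with
  | zero => simp [Fin.ext (hd.trans (add_zero _))]
  | succ d ih =>
    obtain ⟨w, hw⟩ : ∃ w : Fin N, (w : ℕ) = u + d := ⟨⟨u + d, by omega⟩, rfl⟩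
    have hwv : (pathGraph N).Adj w v := by rw [pathGraph_adj]; omega
    have := hwv.reachable.dist_triangle_right u
    have := ih (Fin.le_def.2 (by omega)) hw
    rw [dist_eq_one_iff_adj.2 hwv] at *
    omega

theorem pathGraph_dist_of_le {u v : Fin N} (h : u ≤ v) : (pathGraph N).dist u v = v - u := by
  obtain ⟨p, hp⟩ := (pathGraph_preconnected N u v).exists_walk_length_eq_dist
  have := p.val_le_add_length_of_pathGraph
  have := pathGraph_dist_le h
  omega

theorem pathGraph_diam (n : ℕ) : (pathGraph (n + 1)).diam = n := by
  apply le_antisymm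
  · obtain ⟨u, v, huv⟩ := (pathGraph (n + 1)).exists_dist_eq_diam
    rcases le_total u v with h | h
    · rw [← huv, pathGraph_dist_of_le h]; omega
    · rw [← huv, dist_comm, pathGraph_dist_of_le h]; omega
  · have := (pathGraph (n + 1)).dist_le_diam
      (connected_iff_ediam_ne_top.1 (pathGraph_connected n)) (u := 0) (v := Fin.last n)
    rwa [pathGraph_dist_of_le (Fin.zero_le _), Fin.val_last, Fin.val_zero, Nat.sub_zero] at this

end SimpleGraph

/-- The path graph `P_N` on `N ≥ 2` vertices has diameter `N - 1`, and there
exist `N - 1` compliant matrices whose product is `(1/N)·𝟙𝟙ᵀ`: path graphs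
satisfy the definitive consensus conjecture. -/
theorem path_graph_satisfies_conjecture {N : ℕ} (hN : 2 ≤ N) :
    (SimpleGraph.pathGraph N).diam = N - 1 ∧
    ∃ A : Fin (N - 1) → Matrix (Fin N) (Fin N) ℝ,
      (∀ t : Fin (N - 1), (SimpleGraph.pathGraph N).Complies (A t)) ∧
      (List.ofFn A).reverse.prod = Matrix.of (fun _ _ => (N : ℝ)⁻¹) := by
  obtain ⟨n, rfl⟩ : ∃ n, N = n + 1 := ⟨N - 1, by omega⟩
  obtain ⟨L, hlen, hL, hprod⟩ :=
    SimpleGraph.exists_pathGraph_complies_prod_eq_averagingMatrix_Icc n 0 (Fin.last n) (by simp)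
  have hlen' : L.reverse.length = n + 1 - 1 := by simpa using hlen
  obtain ⟨A, hA⟩ : ∃ A : Fin (n + 1 - 1) → Matrix (Fin (n + 1)) (Fin (n + 1)) ℝ,
      List.ofFn A = L.reverse := hlen' ▸ ⟨_, List.ofFn_getElem⟩
  refine ⟨SimpleGraph.pathGraph_diam n, A,
    fun t => hL _ (List.mem_reverse.1 (hA ▸ List.mem_ofFn.2 ⟨t, rfl⟩)), ?_⟩
  rw [hA, List.reverse_reverse, hprod, ← bot_eq_zero, ← Fin.top_eq_last, Icc_bot_top,
    averagingMatrix_univ, Fintype.card_fin]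
end

section
/- Let G be a connected simple graph on N vertices with diameter D that is distance-regular: there exist integers b₀, b₁, …, b_{D−1} and c₁, c₂, …, c_D such that for every pair of vertices i, j at distance r, the number of neighbors of i at distance r − 1 from j equals c_r (for 1 ≤ r ≤ D) and the number of neighbors of i at distance r + 1 from j equals b_r (for 0 ≤ r ≤ D − 1). Then there exist D matrices A^(1), …, A^(D), each in M(G), such that A^(D) ⋯ A^(1) = (1/N)·𝟙𝟙ᵀ, i.e., every distance-regular graph satisfies the definitive consensus conjecture. -/
open Matrix

/-!
The distance partition around a vertex `j` is equitable: if `T` is the `N × (D+1)` matrix of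
indicators of the spheres around `j`, then `A T = T L` for the adjacency matrix `A` and the
tridiagonal intersection matrix `L`, so `p(A) i j = p(L) (d(i,j)) 0` for every polynomial `p`.
Because `b r * c (r+1) > 0`, a diagonal similarity makes `L` symmetric, so its characteristic
polynomial splits over `ℝ`; it has the root `k = b 0` (eigenvector `𝟙`). Removing that factor
leaves `q = ∏_{j<D} (X - μ j)` with `(L - k) q(L) = 0`. The first column of `q(L)` is therefore
constant (along the rows of `L - k` it propagates through the nonzero `b r`), and its last
entry is `c 1 ⋯ c D ≠ 0`. Hence `q(A)` is a nonzero multiple of `𝟙𝟙ᵀ`; its factors `A - μ j`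
comply with `G`, and rescaling one of them gives the `D` matrices.
-/

open Polynomial Finset

namespace Matrix

section

variable {m n R : Type*} [Fintype m] [Fintype n] [DecidableEq m] [DecidableEq n] [CommRing R]

theorem aeval_mul_eq_mul_aeval {A : Matrix m m R} {B : Matrix n n R} {T : Matrix m n R}
    (h : A * T = T * B) (p : R[X]) : aeval A p * T = T * aeval B p := by
  have hpow : ∀ k : ℕ, A ^ k * T = T * B ^ k := by
    intro k
    induction k with
    | zero => simp
    | succ k ih =>
      rw [pow_succ, Matrix.mul_assoc, h, ← Matrix.mul_assoc, ih, Matrix.mul_assoc, ← pow_succ]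
  induction p using Polynomial.induction_on' with
  | add p q hp hq => rw [map_add, map_add, Matrix.add_mul, Matrix.mul_add, hp, hq]
  | monomial k a =>
    simp only [aeval_monomial, Algebra.algebraMap_eq_smul_one, Matrix.smul_mul, Matrix.mul_smul,
      Matrix.one_mul, hpow]

end

variable {n : ℕ}

theorem exists_isHermitian_diagonal_inv_mul_mul_diagonal
    (M : Matrix (Fin (n + 1)) (Fin (n + 1)) ℝ)
    (hzero : ∀ r s : Fin (n + 1), (r : ℕ) + 1 < s → M r s = 0 ∧ M s r = 0)
    (hpos : ∀ i : Fin n, 0 < M i.castSucc i.succ * M i.succ i.castSucc) :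
    ∃ δ : Fin (n + 1) → ℝ, (∀ r, δ r ≠ 0) ∧
      (diagonal δ⁻¹ * M * diagonal δ).IsHermitian := by
  have hratio : ∀ i : Fin n, 0 < M i.succ i.castSucc / M i.castSucc i.succ := fun i => by
    rcases mul_pos_iff.mp (hpos i) with h | h
    exacts [div_pos h.2 h.1, div_pos_of_neg_of_neg h.2 h.1]
  -- `δ (i+1) / δ i = √(M (i+1) i / M i (i+1))` balances the two off-diagonal entries.
  set w := fun i : Fin n => √(M i.succ i.castSucc / M i.castSucc i.succ)
  set δ := Fin.partialProd w
  have hδ : ∀ r, 0 < δ r := by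
    intro r
    induction r using Fin.induction with
    | zero => simp [δ]
    | succ i ih =>
      rw [show δ i.succ = δ i.castSucc * w i from Fin.partialProd_succ w i]
      exact mul_pos ih (Real.sqrt_pos.mpr (hratio i))
  refine ⟨δ, fun r => (hδ r).ne', ?_⟩
  have hS : ∀ r s, (diagonal δ⁻¹ * M * diagonal δ) r s = (δ r)⁻¹ * M r s * δ s := by
    intro r s
    simp [Matrix.diagonal_mul, Matrix.mul_diagonal]
  have hstep : ∀ i : Fin n, (δ i.castSucc)⁻¹ * M i.castSucc i.succ * δ i.succ
      = (δ i.succ)⁻¹ * M i.succ i.castSucc * δ i.castSucc := by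
    intro i
    have hw : w i ^ 2 = M i.succ i.castSucc / M i.castSucc i.succ := Real.sq_sqrt (hratio i).le
    have hup : M i.castSucc i.succ ≠ 0 := fun h => by simpa [h] using hpos i
    have hw0 : w i ≠ 0 := (Real.sqrt_pos.mpr (hratio i)).ne'
    rw [show δ i.succ = δ i.castSucc * w i from Fin.partialProd_succ w i]
    field_simp
    rw [hw]
    field_simp
  have hsymm : ∀ r s : Fin (n + 1), r ≤ s →
      (δ r)⁻¹ * M r s * δ s = (δ s)⁻¹ * M s r * δ r := by
    intro r s hrs
    rcases (Fin.le_iff_val_le_val.mp hrs).eq_or_lt with h | h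
    · rw [Fin.ext h]
    rcases (Nat.succ_le_of_lt h).eq_or_lt with h' | h'
    · obtain ⟨i, rfl, rfl⟩ : ∃ i : Fin n, i.castSucc = r ∧ i.succ = s :=
        ⟨⟨r, by omega⟩, rfl, Fin.ext (by simp [← h'])⟩
      exact hstep i
    · simp [(hzero r s h').1, (hzero r s h').2]
  ext r s
  rw [conjTranspose_apply, star_trivial, hS, hS]
  rcases le_total r s with h | h
  exacts [(hsymm r s h).symm, hsymm s r h]

theorem exists_charpoly_eq_prod_of_tridiagonal (M : Matrix (Fin (n + 1)) (Fin (n + 1)) ℝ)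
    (hzero : ∀ r s : Fin (n + 1), (r : ℕ) + 1 < s → M r s = 0 ∧ M s r = 0)
    (hpos : ∀ i : Fin n, 0 < M i.castSucc i.succ * M i.succ i.castSucc) :
    ∃ ev : Fin (n + 1) → ℝ, M.charpoly = ∏ i, (X - C (ev i)) := by
  obtain ⟨δ, hδ, hS⟩ := exists_isHermitian_diagonal_inv_mul_mul_diagonal M hzero hpos
  refine ⟨hS.eigenvalues, ?_⟩
  have hinv : diagonal δ * diagonal δ⁻¹ = 1 := by
    rw [diagonal_mul_diagonal, ← diagonal_one]
    exact congrArg diagonal (funext fun r => mul_inv_cancel₀ (hδ r))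
  have hchar : (diagonal δ⁻¹ * M * diagonal δ).charpoly = M.charpoly := by
    rw [Matrix.mul_assoc, charpoly_mul_comm, Matrix.mul_assoc, hinv, Matrix.mul_one]
  rw [← hchar, hS.charpoly_eq]
  simp

end Matrix

def intersectionOffDiag (D : ℕ) (b c : ℕ → ℕ) : Matrix (Fin (D + 1)) (Fin (D + 1)) ℝ :=
  of fun r s =>
    if (s : ℕ) + 1 = r then (c r : ℝ) else if (r : ℕ) + 1 = s then (b r : ℝ) else 0

/-- The diagonal entry `k - b r - c r` is written as `k` minus the off-diagonal row sum, so that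
the rows sum to `k` by construction, with no convention needed for `c 0` or `b D`. -/
def intersectionMatrix (D k : ℕ) (b c : ℕ → ℕ) : Matrix (Fin (D + 1)) (Fin (D + 1)) ℝ :=
  intersectionOffDiag D b c + diagonal fun r => k - ∑ s, intersectionOffDiag D b c r s

section intersectionMatrix

variable {D k : ℕ} {b c : ℕ → ℕ} {r s : Fin (D + 1)}

theorem intersectionMatrix_apply_of_ne (h : r ≠ s) :
    intersectionMatrix D k b c r s = intersectionOffDiag D b c r s := by
  simp [intersectionMatrix, h]

theorem intersectionMatrix_apply_of_succ_eq (h : (s : ℕ) + 1 = r) :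
    intersectionMatrix D k b c r s = c r := by
  rw [intersectionMatrix_apply_of_ne (by omega)]
  simp [intersectionOffDiag, h]

theorem intersectionMatrix_apply_of_eq_succ (h : (r : ℕ) + 1 = s) :
    intersectionMatrix D k b c r s = b r := by
  rw [intersectionMatrix_apply_of_ne (by omega)]
  simp [intersectionOffDiag, h, show (s : ℕ) + 1 ≠ r by omega]

theorem intersectionMatrix_apply_eq_zero (h : r ≠ s) (hsr : (s : ℕ) + 1 ≠ r)
    (hrs : (r : ℕ) + 1 ≠ s) :
    intersectionMatrix D k b c r s = 0 := by
  rw [intersectionMatrix_apply_of_ne h]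
  simp [intersectionOffDiag, hsr, hrs]

theorem sum_intersectionMatrix_apply (r : Fin (D + 1)) :
    ∑ s, intersectionMatrix D k b c r s = k := by
  simp [intersectionMatrix, Finset.sum_add_distrib, diagonal_apply]

theorem intersectionMatrix_mulVec_one :
    intersectionMatrix D k b c *ᵥ (fun _ => 1) = (k : ℝ) • fun _ => 1 := by
  ext r
  simp [mulVec, dotProduct, sum_intersectionMatrix_apply]

theorem apply_eq_apply_zero_of_intersectionMatrix_mulVec_eq_smul (hb : ∀ r < D, b r ≠ 0)
    {y : Fin (D + 1) → ℝ} (hy : intersectionMatrix D k b c *ᵥ y = (k : ℝ) • y)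
    (r : Fin (D + 1)) :
    y r = y 0 := by
  have hrow : ∀ r, ∑ s, intersectionMatrix D k b c r s * (y s - y r) = 0 := by
    intro r
    simp only [mul_sub, Finset.sum_sub_distrib, ← Finset.sum_mul, sum_intersectionMatrix_apply]
    have := congrFun hy r
    simp only [mulVec, dotProduct, Pi.smul_apply, smul_eq_mul] at this
    rw [this, sub_self]
  suffices h : ∀ m : ℕ, ∀ r : Fin (D + 1), (r : ℕ) ≤ m → y r = y 0 from h r r le_rfl
  intro m
  induction m with
  | zero => intro r hr; rw [show r = 0 from Fin.ext (Nat.le_zero.mp hr)]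
  | succ m ih =>
    intro r hr
    rcases hr.lt_or_eq with hr | hr
    · exact ih r (by omega)
    set t : Fin (D + 1) := ⟨m, by omega⟩
    have ht : (t : ℕ) = m := rfl
    -- In row `m`, columns `≤ m` cancel by induction and columns `> m + 1` vanish.
    have hstep := hrow t
    rw [Finset.sum_eq_single r] at hstep
    · rw [intersectionMatrix_apply_of_eq_succ (by omega)] at hstep
      have := (mul_eq_zero.mp hstep).resolve_left (by exact_mod_cast hb m (by omega))
      rw [sub_eq_zero.mp this, ih _ le_rfl]
    · intro s _ hsr
      rcases lt_or_gt_of_ne (Fin.val_ne_of_ne hsr) with hs | hs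
      · rw [ih s (by omega), ih t le_rfl, sub_self, mul_zero]
      · rw [intersectionMatrix_apply_eq_zero (Fin.ne_of_val_ne (by omega)) (by omega) (by omega),
          zero_mul]
    · simp

theorem intersectionMatrix_pow_apply_zero_of_lt {m : ℕ} (hm : m < r) :
    (intersectionMatrix D k b c ^ m) r 0 = 0 := by
  induction m generalizing r with
  | zero => simp [one_apply, Fin.ext_iff, Nat.pos_iff_ne_zero.mp hm]
  | succ m ih =>
    rw [pow_succ', mul_apply]
    refine Finset.sum_eq_zero fun t _ => ?_
    rcases lt_or_ge m t with ht | ht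
    · rw [ih ht, mul_zero]
    · rw [intersectionMatrix_apply_eq_zero (Fin.ne_of_val_ne (by omega)) (by omega) (by omega),
        zero_mul]

theorem intersectionMatrix_pow_apply_zero_self {m : ℕ} (hm : m < D + 1) :
    (intersectionMatrix D k b c ^ m) ⟨m, hm⟩ 0 = ∏ s ∈ Icc 1 m, (c s : ℝ) := by
  induction m with
  | zero => simp
  | succ m ih =>
    rw [pow_succ', mul_apply, Finset.sum_eq_single ⟨m, by omega⟩, ih (by omega),
      intersectionMatrix_apply_of_succ_eq rfl, Finset.prod_Icc_succ_top (by omega), mul_comm]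
    · intro t _ ht
      rcases lt_or_gt_of_ne (fun h => ht (Fin.ext h) : (t : ℕ) ≠ m) with ht | ht
      · rw [intersectionMatrix_apply_eq_zero (Fin.ne_of_val_ne (by simp; omega)) (by simp; omega)
          (by simp; omega), zero_mul]
      · rw [intersectionMatrix_pow_apply_zero_of_lt ht, mul_zero]
    · simp

theorem aeval_intersectionMatrix_last_zero {q : ℝ[X]} (hq : q.Monic) (hdeg : q.natDegree = D) :
    aeval (intersectionMatrix D k b c) q (Fin.last D) 0 = ∏ s ∈ Icc 1 D, (c s : ℝ) := by
  rw [aeval_eq_sum_range, hdeg, Finset.sum_range_succ, Matrix.add_apply, Matrix.sum_apply,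
    Finset.sum_eq_zero, zero_add, Matrix.smul_apply, ← hdeg, hq.coeff_natDegree, one_smul, hdeg]
  · exact intersectionMatrix_pow_apply_zero_self (Nat.lt_succ_self D)
  · intro m hm
    rw [Matrix.smul_apply, intersectionMatrix_pow_apply_zero_of_lt (by simpa using hm), smul_zero]

theorem exists_charpoly_intersectionMatrix_eq (hb : ∀ r < D, 0 < b r)
    (hc : ∀ r, 1 ≤ r → r ≤ D → 0 < c r) :
    ∃ μ : Fin D → ℝ,
      (intersectionMatrix D k b c).charpoly = (X - C (k : ℝ)) * ∏ j, (X - C (μ j)) := by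
  obtain ⟨ev, hev⟩ := (intersectionMatrix D k b c).exists_charpoly_eq_prod_of_tridiagonal
    (fun r s h => ⟨intersectionMatrix_apply_eq_zero (Fin.ne_of_val_ne (by omega)) (by omega)
      (by omega), intersectionMatrix_apply_eq_zero (Fin.ne_of_val_ne (by omega)) (by omega)
      (by omega)⟩)
    (fun i => by
      rw [intersectionMatrix_apply_of_eq_succ (by simp),
        intersectionMatrix_apply_of_succ_eq (by simp)]
      have := hb i i.isLt
      have := hc (i + 1) (by omega) (by omega)
      simp only [Fin.val_castSucc, Fin.val_succ]
      positivity)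
  have hroot : (intersectionMatrix D k b c).charpoly.eval (k : ℝ) = 0 := by
    rw [eval_charpoly, ← exists_mulVec_eq_zero_iff]
    refine ⟨fun _ => 1, fun h => one_ne_zero (congrFun h 0), ?_⟩
    rw [sub_mulVec, intersectionMatrix_mulVec_one, scalar_apply, ← smul_one_eq_diagonal,
      smul_mulVec, one_mulVec, sub_self]
  obtain ⟨i, -, hi⟩ : ∃ i ∈ univ, (k : ℝ) - ev i = 0 := by
    simpa [hev, eval_prod, Finset.prod_eq_zero_iff] using hroot
  refine ⟨ev ∘ i.succAbove, ?_⟩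
  rw [hev, Fin.prod_univ_succAbove _ i, ← sub_eq_zero.mp hi]
  rfl

end intersectionMatrix

namespace SimpleGraph

structure IsDistanceRegularWith {V : Type*} (G : SimpleGraph V) (D : ℕ) (b c : ℕ → ℕ) :
    Prop where
  card_pred : ∀ r, 1 ≤ r → r ≤ D → ∀ i j, G.dist i j = r →
    {v | G.Adj i v ∧ G.dist v j = r - 1}.ncard = c r
  card_succ : ∀ r, r < D → ∀ i j, G.dist i j = r →
    {v | G.Adj i v ∧ G.dist v j = r + 1}.ncard = b r

variable {V : Type*} {G : SimpleGraph V}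

theorem ncard_setOf_adj_and [Fintype V] [DecidableRel G.Adj] (i : V) (p : V → Prop)
    [DecidablePred p] : {v | G.Adj i v ∧ p v}.ncard = #{v ∈ G.neighborFinset i | p v} := by
  rw [← Set.ncard_coe_finset]
  congr
  ext
  simp

theorem Connected.dist_lt_of_diam_eq [Finite V] (hG : G.Connected) {D : ℕ} (hD : G.diam = D)
    (u v : V) : G.dist u v < D + 1 :=
  have := hG.nonempty
  hD ▸ Nat.lt_succ_of_le (G.dist_le_diam (connected_iff_ediam_ne_top.mp hG))

theorem Connected.subsingleton_of_diam_eq_zero [Finite V] (hG : G.Connected) (h : G.diam = 0) :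
    Subsingleton V :=
  have := hG.nonempty
  (diam_eq_zero.mp h).resolve_left (connected_iff_ediam_ne_top.mp hG)

theorem Connected.exists_adj_dist_add_one_eq (hG : G.Connected) {u w : V} (h : 0 < G.dist u w) :
    ∃ v, G.Adj u v ∧ G.dist v w + 1 = G.dist u w := by
  obtain ⟨p, hp⟩ := hG.exists_walk_length_eq_dist u w
  cases p with
  | nil => simp at h
  | @cons _ v _ hadj q =>
    have hq := dist_le q
    have htri : G.dist u w ≤ G.dist u v + G.dist v w := hG.dist_triangle
    rw [Walk.length_cons] at hp
    rw [dist_eq_one_iff_adj.mpr hadj] at htri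
    exact ⟨v, hadj, by omega⟩

theorem Connected.exists_dist_eq_of_le (hG : G.Connected) {u w : V} {r : ℕ}
    (hr : r ≤ G.dist u w) : ∃ x, G.dist x w = r := by
  induction hd : G.dist u w generalizing u with
  | zero => exact ⟨u, by omega⟩
  | succ d ih =>
    rcases (hd ▸ hr).lt_or_eq with hr | hr
    · obtain ⟨v, -, hv⟩ := hG.exists_adj_dist_add_one_eq (u := u) (w := w) (by omega)
      exact ih (u := v) (by omega) (by omega)
    · exact ⟨u, by omega⟩

variable {D : ℕ} {b c : ℕ → ℕ}

noncomputable def sphereIndicator (G : SimpleGraph V) (D : ℕ) (j : V) :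
    Matrix V (Fin (D + 1)) ℝ :=
  of fun v s => if G.dist v j = s then 1 else 0

theorem sphereIndicator_mul_apply [Fintype V] (M : Matrix (Fin (D + 1)) (Fin (D + 1)) ℝ) {i j : V}
    {r : Fin (D + 1)} (hr : G.dist i j = r) (s : Fin (D + 1)) :
    (G.sphereIndicator D j * M) i s = M r s := by
  simp [sphereIndicator, mul_apply, hr, Fin.val_inj]

theorem Connected.mul_sphereIndicator_apply_zero [Fintype V] (hG : G.Connected) (M : Matrix V V ℝ)
    (i j : V) : (M * G.sphereIndicator D j) i 0 = M i j := by
  classical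
  simp [sphereIndicator, mul_apply, hG.dist_eq_zero_iff]

namespace IsDistanceRegularWith

theorem c_pos [Finite V] (h : G.IsDistanceRegularWith D b c) (hG : G.Connected) (hD : G.diam = D)
    {r : ℕ} (hr : 1 ≤ r) (hrD : r ≤ D) : 0 < c r := by
  have := hG.nonempty
  obtain ⟨u, w, huw⟩ := G.exists_dist_eq_diam
  obtain ⟨x, hx⟩ := hG.exists_dist_eq_of_le (u := u) (w := w) (r := r) (by omega)
  obtain ⟨v, hxv, hv⟩ := hG.exists_adj_dist_add_one_eq (u := x) (w := w) (by omega)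
  rw [← h.card_pred r hr hrD x w hx]
  exact (Set.ncard_pos (Set.toFinite _)).mpr ⟨v, hxv, by omega⟩

theorem b_pos [Finite V] (h : G.IsDistanceRegularWith D b c) (hG : G.Connected) (hD : G.diam = D)
    {r : ℕ} (hrD : r < D) : 0 < b r := by
  have := hG.nonempty
  obtain ⟨u, w, huw⟩ := G.exists_dist_eq_diam
  obtain ⟨x, hx⟩ := hG.exists_dist_eq_of_le (u := u) (w := w) (r := r + 1) (by omega)
  obtain ⟨v, hxv, hv⟩ := hG.exists_adj_dist_add_one_eq (u := x) (w := w) (by omega)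
  rw [← h.card_succ r hrD v w (by omega)]
  exact (Set.ncard_pos (Set.toFinite _)).mpr ⟨x, hxv.symm, by omega⟩

variable [Fintype V] [DecidableRel G.Adj]

theorem card_neighborFinset (h : G.IsDistanceRegularWith D b c) (hD : 0 < D) (i : V) :
    #(G.neighborFinset i) = b 0 := by
  rw [← h.card_succ 0 hD i i dist_self, ncard_setOf_adj_and, filter_true_of_mem]
  intro v hv
  rw [zero_add, dist_eq_one_iff_adj]
  exact ((G.mem_neighborFinset i v).mp hv).symm

theorem card_filter_dist_eq (h : G.IsDistanceRegularWith D b c) (hG : G.Connected) (hD : G.diam = D)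
    (hDpos : 0 < D) {i j : V} {r : Fin (D + 1)} (hr : G.dist i j = r) (s : Fin (D + 1)) :
    (#{v ∈ G.neighborFinset i | G.dist v j = s} : ℝ) = intersectionMatrix D (b 0) b c r s := by
  have hoff : ∀ s ≠ r,
      (#{v ∈ G.neighborFinset i | G.dist v j = s} : ℝ) =
        intersectionMatrix D (b 0) b c r s := by
    intro s hs
    by_cases hsr : (s : ℕ) + 1 = r
    · rw [intersectionMatrix_apply_of_succ_eq hsr, ← h.card_pred r (by omega) (by omega) i j hr,
        ncard_setOf_adj_and]
      congr 3
      ext v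
      omega
    by_cases hrs : (r : ℕ) + 1 = s
    · rw [intersectionMatrix_apply_of_eq_succ hrs, ← h.card_succ r (by omega) i j hr,
        ncard_setOf_adj_and]
      congr 3
      ext v
      omega
    rw [intersectionMatrix_apply_eq_zero (Ne.symm hs) hsr hrs, Nat.cast_eq_zero, card_eq_zero,
      filter_eq_empty_iff]
    intro v hv
    have := ((G.mem_neighborFinset i v).mp hv).diff_dist_adj (u := j)
    rw [dist_comm, dist_comm (u := j)] at this
    omega
  rcases ne_or_eq s r with hs | rfl
  · exact hoff s hs
  have hdeg : ∑ t : Fin (D + 1), (#{v ∈ G.neighborFinset i | G.dist v j = t} : ℝ) = b 0 := by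
    rw [← h.card_neighborFinset hDpos i, card_eq_sum_card_fiberwise (f := fun v => G.dist v j)
      (t := range (D + 1)) (fun v _ => mem_range.mpr (hG.dist_lt_of_diam_eq hD v j)),
      Nat.cast_sum,
      Fin.sum_univ_eq_sum_range (fun t => (#{v ∈ G.neighborFinset i | G.dist v j = t} : ℝ))]
  have hrow := sum_intersectionMatrix_apply (k := b 0) (b := b) (c := c) s
  rw [← add_sum_erase _ _ (mem_univ s)] at hdeg hrow
  rw [sum_congr rfl fun t ht => hoff t (ne_of_mem_erase ht)] at hdeg
  linarith

theorem adjMatrix_mul_sphereIndicator (h : G.IsDistanceRegularWith D b c) (hG : G.Connected)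
    (hD : G.diam = D) (hDpos : 0 < D) (j : V) :
    G.adjMatrix ℝ * G.sphereIndicator D j =
      G.sphereIndicator D j * intersectionMatrix D (b 0) b c := by
  ext i s
  have hr : G.dist i j = (⟨G.dist i j, hG.dist_lt_of_diam_eq hD i j⟩ : Fin (D + 1)) := rfl
  rw [sphereIndicator_mul_apply _ hr, ← h.card_filter_dist_eq hG hD hDpos hr s,
    natCast_card_filter, neighborFinset_eq_filter, sum_filter, mul_apply]
  refine sum_congr rfl fun v _ => ?_
  simp only [adjMatrix_apply, sphereIndicator, of_apply, ite_mul, one_mul, zero_mul]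

variable [DecidableEq V]

theorem aeval_adjMatrix_apply (h : G.IsDistanceRegularWith D b c) (hG : G.Connected)
    (hD : G.diam = D) (hDpos : 0 < D) (p : ℝ[X]) {i j : V} {r : Fin (D + 1)}
    (hr : G.dist i j = r) :
    aeval (G.adjMatrix ℝ) p i j = aeval (intersectionMatrix D (b 0) b c) p r 0 := by
  rw [← hG.mul_sphereIndicator_apply_zero (D := D) (aeval (G.adjMatrix ℝ) p) i j,
    aeval_mul_eq_mul_aeval (h.adjMatrix_mul_sphereIndicator hG hD hDpos j),
    sphereIndicator_mul_apply _ hr]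

theorem exists_aeval_adjMatrix_eq_const (h : G.IsDistanceRegularWith D b c) (hG : G.Connected)
    (hD : G.diam = D) (hDpos : 0 < D) :
    ∃ μ : Fin D → ℝ, ∃ γ : ℝ, γ ≠ 0 ∧
      aeval (G.adjMatrix ℝ) (∏ j, (X - C (μ j))) = of fun _ _ => γ := by
  set L := intersectionMatrix D (b 0) b c
  obtain ⟨μ, hμ⟩ := exists_charpoly_intersectionMatrix_eq (k := b 0)
    (fun r hr => h.b_pos hG hD hr) (fun r hr hrD => h.c_pos hG hD hr hrD)
  set M := aeval L (∏ j, (X - C (μ j)))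
  have hLM : L * M = (b 0 : ℝ) • M := by
    have := aeval_self_charpoly L
    rwa [hμ, map_mul, map_sub, aeval_X, aeval_C, sub_mul, sub_eq_zero,
      Algebra.algebraMap_eq_smul_one, Matrix.smul_mul, Matrix.one_mul] at this
  have hconst : ∀ r, M r 0 = M 0 0 := apply_eq_apply_zero_of_intersectionMatrix_mulVec_eq_smul
    (fun r hr => (h.b_pos hG hD hr).ne') (y := fun r => M r 0) (by
      ext r
      simpa [mulVec, dotProduct, mul_apply] using congrFun (congrFun hLM r) 0)
  have hlast : M (Fin.last D) 0 = ∏ s ∈ Icc 1 D, (c s : ℝ) :=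
    aeval_intersectionMatrix_last_zero (monic_prod_of_monic _ _ fun j _ => monic_X_sub_C (μ j))
      (by simp)
  refine ⟨μ, M 0 0, ?_, ?_⟩
  · rw [← hconst (Fin.last D), hlast]
    exact prod_ne_zero_iff.mpr fun s hs =>
      Nat.cast_ne_zero.mpr (h.c_pos hG hD (mem_Icc.mp hs).1 (mem_Icc.mp hs).2).ne'
  · ext i j
    rw [h.aeval_adjMatrix_apply hG hD hDpos _ (r := ⟨G.dist i j, hG.dist_lt_of_diam_eq hD i j⟩)
      rfl, of_apply]
    exact hconst _

end IsDistanceRegularWith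

end SimpleGraph

theorem SimpleGraph.complies_aeval_adjMatrix {N : ℕ} (G : SimpleGraph (Fin N))
    [DecidableRel G.Adj] {p : ℝ[X]} (hp : p.natDegree ≤ 1) :
    G.Complies (aeval (G.adjMatrix ℝ) p) := by
  intro i j hij hadj
  rw [eq_X_add_C_of_natDegree_le_one hp]
  simp [hij, algebraMap_matrix_apply, G.adj_comm j i, hadj]

theorem SimpleGraph.exists_complies_prod_eq_of_aeval_adjMatrix_eq {N D : ℕ}
    (G : SimpleGraph (Fin N)) [DecidableRel G.Adj] (hDpos : 0 < D) (μ : Fin D → ℝ) {γ : ℝ}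
    (hγ : γ ≠ 0)
    (h : aeval (G.adjMatrix ℝ) (∏ j, (X - C (μ j))) = of fun _ _ => γ) :
    ∃ A : Fin D → Matrix (Fin N) (Fin N) ℝ,
      (∀ t, G.Complies (A t)) ∧ (List.ofFn A).reverse.prod = of fun _ _ => (N : ℝ)⁻¹ := by
  set f : Fin D → ℝ[X] := fun t =>
    C ((Pi.mulSingle ⟨0, hDpos⟩ (γ * N)⁻¹ : Fin D → ℝ) t) * (X - C (μ t))
  refine ⟨aeval (G.adjMatrix ℝ) ∘ f, fun t =>
    G.complies_aeval_adjMatrix ((natDegree_C_mul_le _ _).trans (natDegree_X_sub_C _).le), ?_⟩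
  have hf : ∏ t, f t = C (γ * N)⁻¹ * ∏ j, (X - C (μ j)) := by
    rw [prod_mul_distrib, ← map_prod, prod_pi_mulSingle', if_pos (mem_univ _)]
  rw [← List.map_ofFn, ← List.map_reverse, ← map_list_prod, List.prod_reverse, List.prod_ofFn,
    hf, map_mul, h, aeval_C, Algebra.algebraMap_eq_smul_one, Matrix.smul_mul, Matrix.one_mul]
  ext i j
  simp [field]

/-- Every distance-regular graph satisfies the definitive consensus
conjecture: if `G` is connected of diameter `D` and there are intersection
numbers `b₀,…,b_{D-1}` and `c₁,…,c_D` such that for every pair of vertices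
`i, j` at distance `r` the number of neighbors of `i` at distance `r - 1`
(resp. `r + 1`) from `j` is `c r` (resp. `b r`), then average consensus is
achievable on `G` with `D` compliant matrices. -/
theorem distance_regular_satisfies_conjecture {N : ℕ} (G : SimpleGraph (Fin N))
    (hG : G.Connected) (D : ℕ) (hD : G.diam = D) (b c : ℕ → ℕ)
    (hc : ∀ r : ℕ, 1 ≤ r → r ≤ D → ∀ i j : Fin N, G.dist i j = r →
      {v : Fin N | G.Adj i v ∧ G.dist v j = r - 1}.ncard = c r)
    (hb : ∀ r : ℕ, r < D → ∀ i j : Fin N, G.dist i j = r →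
      {v : Fin N | G.Adj i v ∧ G.dist v j = r + 1}.ncard = b r) :
    ∃ A : Fin D → Matrix (Fin N) (Fin N) ℝ,
      (∀ t : Fin D, G.Complies (A t)) ∧
      (List.ofFn A).reverse.prod = Matrix.of (fun _ _ => (N : ℝ)⁻¹) := by
  classical
  rcases Nat.eq_zero_or_pos D with rfl | hDpos
  · have := hG.subsingleton_of_diam_eq_zero hD
    obtain rfl : N = 1 := le_antisymm (by simpa using Fintype.card_le_one_iff_subsingleton.mpr this)
      (Fin.pos_iff_nonempty.mpr hG.nonempty)
    exact ⟨Fin.elim0, fun t => t.elim0, by ext i j; simp [Subsingleton.elim i j]⟩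
  obtain ⟨μ, γ, hγ, hμ⟩ :=
    (SimpleGraph.IsDistanceRegularWith.mk hc hb).exists_aeval_adjMatrix_eq_const hG hD hDpos
  exact G.exists_complies_prod_eq_of_aeval_adjMatrix_eq hDpos μ hγ hμ
end

section
/- Let G be a connected simple graph on N vertices. Suppose there exists a symmetric, entrywise nonnegative, irreducible matrix M ∈ M(G) having 𝟙 as an eigenvector and exactly s distinct eigenvalues. Then there exist s − 1 real matrices A^(1), …, A^(s−1), each in M(G), such that A^(s−1) ⋯ A^(1) = (1/N)·𝟙𝟙ᵀ. -/
open Matrix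

/-!
Let `μ₁, …, μ_{s-1}` be the eigenvalues of `M` other than `k` and take
`A⁽ᵗ⁾ = (M - μₜ) / (k - μₜ)`, which complies with `G` because `M` does. The product acts on an
eigenvector of `M` with eigenvalue `λ` as multiplication by `∏ₜ (λ - μₜ) / (k - μₜ)`, which is `1`
for `λ = k` and `0` otherwise. Since `M` is symmetric it has an orthonormal eigenbasis, so the
product is the orthogonal projection onto the `k`-eigenspace. By the Perron–Frobenius argument
(a maximum of a `k`-eigenvector propagates along the positive entries of the powers of the
irreducible `M`), that eigenspace is spanned by `𝟙`, and the projection onto it is `𝟙𝟙ᵀ / N`.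
-/

namespace SimpleGraph

variable {N : ℕ} {G : SimpleGraph (Fin N)} {A B : Matrix (Fin N) (Fin N) ℝ}

theorem Complies.sub (hA : G.Complies A) (hB : G.Complies B) : G.Complies (A - B) :=
  fun i j hij hG => by rw [Matrix.sub_apply, hA i j hij hG, hB i j hij hG, sub_zero]

theorem Complies.smul (hA : G.Complies A) (c : ℝ) : G.Complies (c • A) :=
  fun i j hij hG => by rw [Matrix.smul_apply, hA i j hij hG, smul_zero]

theorem complies_one : G.Complies 1 :=
  fun _ _ hij _ => one_apply_ne hij

end SimpleGraph

theorem Set.Finite.exists_range_eq_of_ncard_eq {α : Type*} {s : Set α} (hs : s.Finite) {n : ℕ}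
    (h : s.ncard = n) : ∃ f : Fin n → α, Set.range f = s := by
  have := hs.to_subtype
  let e := Finite.equivFinOfCardEq ((Nat.card_coe_set_eq s).trans h)
  refine ⟨fun t => e.symm t, ?_⟩
  rw [Set.range_comp' Subtype.val e.symm, e.symm.surjective.range_eq, Set.image_univ,
    Subtype.range_coe]

namespace Matrix

variable {n : Type*} [Fintype n]

theorem finite_setOf_exists_mulVec_eq_smul {K : Type*} [Field K] [DecidableEq n]
    (A : Matrix n n K) : {μ : K | ∃ v, v ≠ 0 ∧ A *ᵥ v = μ • v}.Finite :=
  (Module.End.finite_hasEigenvalue (toLin' A)).subset fun _ ⟨_, hv, hAv⟩ =>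
    Module.End.hasEigenvalue_of_hasEigenvector
      (Module.End.hasEigenvector_iff.mpr ⟨Module.End.mem_eigenspace_iff.mpr hAv, hv⟩)

theorem IsHermitian.ext_of_mulVec_eigenvectorBasis {𝕜 : Type*} [RCLike 𝕜] [DecidableEq n]
    {A B C : Matrix n n 𝕜} (hA : A.IsHermitian)
    (h : ∀ i, B *ᵥ ⇑(hA.eigenvectorBasis i) = C *ᵥ ⇑(hA.eigenvectorBasis i)) : B = C :=
  toLin'.injective <| (hA.eigenvectorBasis.toBasis.map (WithLp.linearEquiv 2 𝕜 (n → 𝕜))).ext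
    fun i => by simpa using h i

theorem IsSymm.dotProduct_eq_zero_of_mulVec_eq_smul {R : Type*} [CommRing R] [IsDomain R]
    {A : Matrix n n R} (hA : A.IsSymm) {v w : n → R} {a b : R}
    (hv : A *ᵥ v = a • v) (hw : A *ᵥ w = b • w) (hab : a ≠ b) : v ⬝ᵥ w = 0 := by
  have h : a * (v ⬝ᵥ w) = b * (v ⬝ᵥ w) := by
    rw [← smul_eq_mul, ← smul_dotProduct, ← hv, ← vecMul_transpose, hA.eq, ← dotProduct_mulVec,
      hw, dotProduct_smul, smul_eq_mul]
  exact (mul_eq_mul_right_iff.mp h).resolve_left hab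

theorem pow_mulVec_of_mulVec_eq_smul {R : Type*} [CommSemiring R] [DecidableEq n]
    {A : Matrix n n R} {v : n → R} {a : R} (hv : A *ᵥ v = a • v) (m : ℕ) :
    (A ^ m) *ᵥ v = a ^ m • v := by
  induction m with
  | zero => simp
  | succ m ih => rw [pow_succ, ← mulVec_mulVec, hv, mulVec_smul, ih, smul_smul, pow_succ']

theorem IsIrreducible.exists_eq_const_of_mulVec_eq_smul {R : Type*} [CommRing R] [LinearOrder R]
    [IsStrictOrderedRing R] [DecidableEq n] [Nonempty n] {A : Matrix n n R} (hA : A.IsIrreducible)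
    {k : R} (hk : A *ᵥ (fun _ => 1) = k • fun _ => 1) {v : n → R} (hv : A *ᵥ v = k • v) :
    ∃ c, v = fun _ => c := by
  obtain ⟨j, -, hj⟩ := Finset.exists_max_image Finset.univ v Finset.univ_nonempty
  refine ⟨v j, funext fun i => ?_⟩
  set u : n → R := v j • (fun _ => 1) - v
  have hu_nonneg : ∀ l, 0 ≤ u l := fun l => by simpa [u] using hj l (Finset.mem_univ l)
  have hu : A *ᵥ u = k • u := by rw [mulVec_sub, mulVec_smul, hk, hv, smul_comm, smul_sub]
  obtain ⟨m, -, hm⟩ := (isIrreducible_iff_exists_pow_pos hA.nonneg).mp hA j i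
  have hsum : ∑ l, (A ^ m) j l * u l = 0 := by
    simpa [mulVec, dotProduct, u] using congrFun (pow_mulVec_of_mulVec_eq_smul hu m) j
  have hui : (A ^ m) j i * u i = 0 :=
    (Finset.sum_eq_zero_iff_of_nonneg fun l _ =>
      mul_nonneg (pow_apply_nonneg hA.nonneg m j l) (hu_nonneg l)).mp hsum i (Finset.mem_univ i)
  simpa [u, sub_eq_zero, eq_comm] using (mul_eq_zero.mp hui).resolve_left hm.ne'

theorem list_prod_mulVec_eq_smul {ι R : Type*} [CommRing R] [DecidableEq n]
    (A : ι → Matrix n n R) (c : ι → R) {v : n → R} (h : ∀ i, A i *ᵥ v = c i • v) (L : List ι) :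
    (L.map A).prod *ᵥ v = (L.map c).prod • v := by
  induction L with
  | nil => simp
  | cons i L ih =>
    rw [List.map_cons, List.prod_cons, ← mulVec_mulVec, ih, mulVec_smul, h, smul_smul,
      List.map_cons, List.prod_cons, mul_comm]

theorem ofFn_reverse_prod_mulVec_eq_smul {R : Type*} [CommRing R] [DecidableEq n] {m : ℕ}
    (A : Fin m → Matrix n n R) (c : Fin m → R) {v : n → R} (h : ∀ t, A t *ᵥ v = c t • v) :
    (List.ofFn A).reverse.prod *ᵥ v = (∏ t, c t) • v := by
  rw [List.ofFn_eq_map, ← List.map_reverse, list_prod_mulVec_eq_smul A c h, List.map_reverse,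
    List.prod_reverse, ← List.ofFn_eq_map, List.prod_ofFn]

theorem smul_sub_smul_one_mulVec {K : Type*} [Field K] [DecidableEq n] {A : Matrix n n K}
    {v : n → K} {a : K} (hv : A *ᵥ v = a • v) (b c : K) :
    (c • (A - b • 1)) *ᵥ v = (c * (a - b)) • v := by
  rw [smul_mulVec, sub_mulVec, smul_mulVec, one_mulVec, hv, ← sub_smul, smul_smul]

theorem of_const_mulVec {R : Type*} [NonUnitalNonAssocSemiring R] (a : R) (v : n → R) :
    of (fun _ _ => a : n → n → R) *ᵥ v = fun _ => a * ∑ j, v j := by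
  ext; simp [mulVec, dotProduct, Finset.mul_sum]

end Matrix

theorem consensus_in_s_minus_one_steps_general {N : ℕ} (G : SimpleGraph (Fin N))
    (M : Matrix (Fin N) (Fin N) ℝ) (hM : G.Complies M)
    (hsymm : M.IsSymm) (hnonneg : ∀ i j, 0 ≤ M i j)
    (hirr : ∀ i j : Fin N, ∃ m : ℕ, 1 ≤ m ∧ 0 < (M ^ m) i j)
    (k : ℝ) (hk : M.mulVec (fun _ => (1 : ℝ)) = k • (fun _ => (1 : ℝ)))
    (s : ℕ)
    (heig : {μ : ℝ | ∃ v : Fin N → ℝ, v ≠ 0 ∧ M.mulVec v = μ • v}.ncard = s) :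
    ∃ A : Fin (s - 1) → Matrix (Fin N) (Fin N) ℝ,
      (∀ t : Fin (s - 1), G.Complies (A t)) ∧
      (List.ofFn A).reverse.prod = Matrix.of (fun _ _ => (N : ℝ)⁻¹) := by
  rcases isEmpty_or_nonempty (Fin N) with _ | hN
  · exact ⟨fun _ => M, fun _ => hM, Subsingleton.elim _ _⟩
  set S := {μ : ℝ | ∃ v : Fin N → ℝ, v ≠ 0 ∧ M.mulVec v = μ • v}
  have hkS : k ∈ S := ⟨_, one_ne_zero, hk⟩
  obtain ⟨μ, hμ⟩ : ∃ μ : Fin (s - 1) → ℝ, Set.range μ = S \ {k} :=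
    M.finite_setOf_exists_mulVec_eq_smul.sdiff.exists_range_eq_of_ncard_eq
      (by rw [Set.ncard_sdiff_singleton_of_mem hkS, heig])
  have hμk (t : Fin (s - 1)) : μ t ≠ k := (hμ.subset ⟨t, rfl⟩).2
  have hH : M.IsHermitian := isHermitian_iff_isSymm.mpr hsymm
  have hM_irr : M.IsIrreducible :=
    (isIrreducible_iff_exists_pow_pos hnonneg).mpr fun i j => (hirr i j).imp fun _ h => h
  refine ⟨fun t => (k - μ t)⁻¹ • (M - μ t • 1),
    fun t => (hM.sub (SimpleGraph.complies_one.smul _)).smul _, ?_⟩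
  refine hH.ext_of_mulVec_eigenvectorBasis fun i => ?_
  have hv := hH.mulVec_eigenvectorBasis i
  rw [ofFn_reverse_prod_mulVec_eq_smul _ _ fun t => smul_sub_smul_one_mulVec hv _ _,
    of_const_mulVec]
  rcases eq_or_ne (hH.eigenvalues i) k with hik | hik
  · obtain ⟨c, hc⟩ := hM_irr.exists_eq_const_of_mulVec_eq_smul hk (hik ▸ hv)
    have hN0 : (N : ℝ) ≠ 0 := Nat.cast_ne_zero.mpr (Fin.pos_iff_nonempty.mpr hN).ne'
    rw [Finset.prod_eq_one fun t _ => by rw [hik, inv_mul_cancel₀ (sub_ne_zero.mpr (hμk t).symm)],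
      one_smul, hc]
    ext
    simp [inv_mul_cancel_left₀ hN0]
  · obtain ⟨t, ht⟩ : hH.eigenvalues i ∈ Set.range μ :=
      hμ ▸ ⟨⟨_, by simpa using hH.eigenvectorBasis.orthonormal.ne_zero i, hv⟩, hik⟩
    rw [Finset.prod_eq_zero (Finset.mem_univ t) (by rw [ht, sub_self, mul_zero]), zero_smul,
      ← dotProduct_one, hsymm.dotProduct_eq_zero_of_mulVec_eq_smul (w := 1) hv hk hik]
    ext
    simp

/-- If a connected graph `G` admits a symmetric, entrywise nonnegative,
irreducible compliant matrix `M` having the all-ones vector `𝟙` as an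
eigenvector and exactly `s` distinct eigenvalues, then average consensus on
`G` is achievable with `s - 1` compliant matrices. -/
theorem consensus_in_s_minus_one_steps {N : ℕ} (G : SimpleGraph (Fin N))
    (hG : G.Connected)
    (M : Matrix (Fin N) (Fin N) ℝ) (hM : G.Complies M)
    (hsymm : M.IsSymm) (hnonneg : ∀ i j, 0 ≤ M i j)
    (hirr : ∀ i j : Fin N, ∃ m : ℕ, 1 ≤ m ∧ 0 < (M ^ m) i j)
    (k : ℝ) (hk : M.mulVec (fun _ => (1 : ℝ)) = k • (fun _ => (1 : ℝ)))
    (s : ℕ)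
    (heig : {μ : ℝ | ∃ v : Fin N → ℝ, v ≠ 0 ∧ M.mulVec v = μ • v}.ncard = s) :
    ∃ A : Fin (s - 1) → Matrix (Fin N) (Fin N) ℝ,
      (∀ t : Fin (s - 1), G.Complies (A t)) ∧
      (List.ofFn A).reverse.prod = Matrix.of (fun _ _ => (N : ℝ)⁻¹) :=
  consensus_in_s_minus_one_steps_general G M hM hsymm hnonneg hirr k hk s heig
end
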